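/- arXiv:0908.1714 — 6 statements merged into one kernel-verified Lean document; each statement's English description precedes it below -/
import Mathlib

section
/- For every even integer r with 0 ≤ r ≤ n, the trace of the generalized Newton transformation satisfies Tr(T_r) = (n − r) S_r. -/
/-!
Write `K` for the Kronecker matrix `(δ^{i_a}_{j_b})_{a,b}` of the multi-indices `i, j` of
length `r`. The Schur complement of the bottom-right entry `1` gives
`δ^{i p}_{j p} = det (K - u_p w_pᵀ)` with `u_p = (δ^{i_a}_p)_a` and `w_p = (δ^p_{j_b})_b`, and
the rank-one expansion `det (K - u wᵀ) = det K - Σ_a u_a det (K with row a replaced by w)`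
holds without any invertibility of `K`. Summed over `p`, the `a`-th correction only sees
`p = i_a`, where `w_p` is the `a`-th row of `K` itself, so it contributes `det K`. Hence
`Σ_p δ^{i p}_{j p} = (n - r) δ^i_j`, and contracting with the pairings turns `Tr T_r` into
`(n - r) S_r`.
-/

open scoped BigOperators

noncomputable section

/-- The generalized Kronecker symbol `δ^{i₁…i_r}_{j₁…j_r}`:
the determinant of the `r × r` matrix whose `(a,b)` entry is `δ^{i_a}_{j_b}`. -/
def gKron {n r : ℕ} (i j : Fin r → Fin n) : ℝ :=
  Matrix.det (Matrix.of fun a b : Fin r => if i a = j b then (1 : ℝ) else 0)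

/-- The pairing `⟨B_{i₁}^{j₁}, B_{i₂}^{j₂}⟩ = Σ_α A^α{}_{i₁}^{j₁} A^α{}_{i₂}^{j₂}`.
Here `A α` is a matrix with the convention that `A^α{}_i^j` (row `j`, column `i`)
is `A α j i`. -/
def pairing {n l : ℕ} (A : Fin l → Matrix (Fin n) (Fin n) ℝ)
    (i₁ j₁ i₂ j₂ : Fin n) : ℝ :=
  ∑ α : Fin l, A α j₁ i₁ * A α j₂ i₂

/-- The product `⟨B_{i₁}^{j₁},B_{i₂}^{j₂}⟩ ⋯ ⟨B_{i_{2s-1}}^{j_{2s-1}},B_{i_{2s}}^{j_{2s}}⟩`. -/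
def pairProd {n l : ℕ} (A : Fin l → Matrix (Fin n) (Fin n) ℝ) (s : ℕ)
    (i j : Fin (2 * s) → Fin n) : ℝ :=
  ∏ t : Fin s,
    pairing A (i ⟨2 * t.1, by omega⟩) (j ⟨2 * t.1, by omega⟩)
      (i ⟨2 * t.1 + 1, by omega⟩) (j ⟨2 * t.1 + 1, by omega⟩)

/-- The `r`-th mean curvature `S_r` for `r = 2s`. -/
def meanCurv {n l : ℕ} (A : Fin l → Matrix (Fin n) (Fin n) ℝ) (s : ℕ) : ℝ :=
  (1 / (Nat.factorial (2 * s) : ℝ)) *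
    ∑ i : Fin (2 * s) → Fin n, ∑ j : Fin (2 * s) → Fin n,
      gKron i j * pairProd A s i j

/-- The generalized Newton transformation `T_r` for `r = 2s`; the entry
`(T_r)^p_u` is in row `p`, column `u`. -/
def newton {n l : ℕ} (A : Fin l → Matrix (Fin n) (Fin n) ℝ) (s : ℕ) :
    Matrix (Fin n) (Fin n) ℝ :=
  Matrix.of fun p u =>
    (1 / (Nat.factorial (2 * s) : ℝ)) *
      ∑ i : Fin (2 * s) → Fin n, ∑ j : Fin (2 * s) → Fin n,
        gKron (Fin.snoc i p) (Fin.snoc j u) * pairProd A s i j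

/-- The transformation `T_q^α` for odd `q = 2s + 1`; the entry `(T_q^α)^p_u`
is in row `p`, column `u`. -/
def newtonOdd {n l : ℕ} (A : Fin l → Matrix (Fin n) (Fin n) ℝ) (s : ℕ) (α : Fin l) :
    Matrix (Fin n) (Fin n) ℝ :=
  Matrix.of fun p u =>
    (1 / (Nat.factorial (2 * s + 1) : ℝ)) *
      ∑ i : Fin (2 * s) → Fin n, ∑ j : Fin (2 * s) → Fin n, ∑ a : Fin n, ∑ b : Fin n,
        gKron (Fin.snoc (Fin.snoc i a) p) (Fin.snoc (Fin.snoc j b) u)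
          * pairProd A s i j * A α b a

namespace Matrix

variable {R n : Type*} [CommRing R] [Fintype n] [DecidableEq n]

theorem det_add_vecMulVec_self_row (M : Matrix n n R) {c : n → R} {b : n} (hc : c b = 0) :
    (M + vecMulVec c (M b)).det = M.det := by
  have hfac : M + vecMulVec c (M b) = (1 + vecMulVec c (Pi.single b 1)) * M := by
    rw [Matrix.add_mul, Matrix.one_mul, vecMulVec_mul, single_one_vecMul]
    rfl
  rw [hfac, det_mul, vecMulVec_eq Unit, det_one_add_replicateCol_mul_replicateRow,
    single_dotProduct, one_mul, hc, add_zero, one_mul]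

theorem det_add_vecMulVec (A : Matrix n n R) (u v : n → R) :
    (A + vecMulVec u v).det = A.det + ∑ a, u a * (A.updateRow a v).det := by
  suffices ∀ s : Finset n, (A + vecMulVec (fun a => if a ∈ s then u a else 0) v).det
      = A.det + ∑ a ∈ s, u a * (A.updateRow a v).det by
    simpa using this Finset.univ
  intro s
  induction s using Finset.induction_on with
  | empty => simp [← Pi.zero_def]
  | insert b s hb ih =>
    set M := A + vecMulVec (fun a => if a ∈ s then u a else 0) v
    have hstep : A + vecMulVec (fun a => if a ∈ insert b s then u a else 0) v
        = M.updateRow b (M b + u b • v) := by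
      ext a c
      rcases eq_or_ne a b with rfl | hab
      · simp [M, hb, vecMulVec_apply]
      · simp [M, hab, vecMulVec_apply]
    have hrow : M.updateRow b v = A.updateRow b v
        + vecMulVec (fun a => if a ∈ s then u a else 0) (A.updateRow b v b) := by
      ext a c
      rcases eq_or_ne a b with rfl | hab
      · simp [M, hb, vecMulVec_apply]
      · simp [M, hab, vecMulVec_apply]
    rw [hstep, det_updateRow_add, det_updateRow_smul, updateRow_eq_self, hrow,
      det_add_vecMulVec_self_row _ (by simp [hb]), ih, Finset.sum_insert hb]
    ring

theorem det_fin_succ_eq_det_sub_vecMulVec {r : ℕ} (M : Matrix (Fin (r + 1)) (Fin (r + 1)) R)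
    (h : M (Fin.last r) (Fin.last r) = 1) :
    M.det = (M.submatrix Fin.castSucc Fin.castSucc
      - vecMulVec (fun a : Fin r => M a.castSucc (Fin.last r))
          (fun b : Fin r => M (Fin.last r) b.castSucc)).det := by
  rw [← det_submatrix_equiv_self finSumFinEquiv M, vecMulVec_eq (Fin 1),
    ← det_fromBlocks_one₂₂]
  congr 1
  have hlast : ∀ a : Fin 1, Fin.natAdd r a = Fin.last r := fun a => by
    obtain rfl := Fin.fin_one_eq_zero a; rfl
  ext (a | a) (b | b) <;> simp [hlast, h, Fin.castSucc, Fin.fin_one_eq_zero]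

end Matrix

def kroneckerMatrix {n r : ℕ} (i j : Fin r → Fin n) : Matrix (Fin r) (Fin r) ℝ :=
  Matrix.of fun a b => if i a = j b then 1 else 0

theorem gKron_snoc_snoc {n r : ℕ} (i j : Fin r → Fin n) (p : Fin n) :
    gKron (Fin.snoc i p) (Fin.snoc j p) = (kroneckerMatrix i j
      - Matrix.vecMulVec (fun a => if i a = p then 1 else 0)
          (fun b => if p = j b then 1 else 0)).det := by
  rw [gKron, Matrix.det_fin_succ_eq_det_sub_vecMulVec _ (by simp)]
  congr 2
  · ext a b; simp [kroneckerMatrix]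
  · ext a b; simp [Matrix.vecMulVec_apply]

theorem sum_gKron_snoc_snoc {n r : ℕ} (i j : Fin r → Fin n) :
    ∑ p, gKron (Fin.snoc i p) (Fin.snoc j p) = ((n : ℝ) - r) * gKron i j := by
  have hrow : ∀ a, ∑ p, (if i a = p then 1 else 0)
      * ((kroneckerMatrix i j).updateRow a fun b => if p = j b then 1 else 0).det
      = (kroneckerMatrix i j).det := fun a => by
    simp only [ite_mul, one_mul, zero_mul, Finset.sum_ite_eq, Finset.mem_univ, if_true]
    exact congrArg Matrix.det (Matrix.updateRow_eq_self _ a)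
  simp_rw [gKron_snoc_snoc, sub_eq_add_neg, ← Matrix.neg_vecMulVec, Matrix.det_add_vecMulVec,
    Finset.sum_add_distrib, Finset.sum_comm (γ := Fin n), Pi.neg_apply, neg_mul,
    Finset.sum_neg_distrib, hrow]
  simp [gKron, kroneckerMatrix]
  ring

theorem stmt2_general (n l : ℕ)
    (A : Fin l → Matrix (Fin n) (Fin n) ℝ) (r s : ℕ) (hr : r = 2 * s) :
    (newton A s).trace = ((n : ℝ) - (r : ℝ)) * meanCurv A s := by
  subst hr
  calc (newton A s).trace
      = ∑ p, 1 / ((2 * s).factorial : ℝ) *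
          ∑ i : Fin (2 * s) → Fin n, ∑ j : Fin (2 * s) → Fin n,
            gKron (Fin.snoc i p) (Fin.snoc j p) * pairProd A s i j := rfl
    _ = 1 / ((2 * s).factorial : ℝ) *
          ∑ i : Fin (2 * s) → Fin n, ∑ j : Fin (2 * s) → Fin n,
            (∑ p, gKron (Fin.snoc i p) (Fin.snoc j p)) * pairProd A s i j := by
        simp only [← Finset.mul_sum, Finset.sum_mul]
        rw [Finset.sum_comm]
        exact congrArg _ (Finset.sum_congr rfl fun _ _ => Finset.sum_comm)
    _ = ((n : ℝ) - (2 * s : ℕ)) * meanCurv A s := by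
        simp only [sum_gKron_snoc_snoc, meanCurv, Finset.mul_sum, mul_assoc, mul_left_comm]

/-- For every even integer `r` with `0 ≤ r ≤ n`,
`Tr(T_r) = (n − r) S_r`. -/
theorem stmt2 (n l : ℕ) (hn : 1 ≤ n) (hl : 1 ≤ l)
    (A : Fin l → Matrix (Fin n) (Fin n) ℝ) (r s : ℕ) (hr : r = 2 * s) (hrn : r ≤ n) :
    (newton A s).trace = ((n : ℝ) - (r : ℝ)) * meanCurv A s :=
  stmt2_general n l A r s hr
end
end

section
/- For every even integer r with 2 ≤ r ≤ n, the generalized Newton transformation satisfies the matrix identity T_r = S_r · I − Σ_{α=1}^{l} A^α T_{r−1}^{α}. -/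
open scoped BigOperators

noncomputable section

open Equiv Function




-- val of succAbove
lemma succAbove_val {N : ℕ} (p : Fin (N+1)) (i : Fin N) :
    ((p.succAbove i : Fin (N+1)) : ℕ) = if (i : ℕ) < (p : ℕ) then (i : ℕ) else (i : ℕ) + 1 := by
  rw [Fin.succAbove]
  by_cases h : (i:ℕ) < (p:ℕ)
  · rw [if_pos (by simpa [Fin.lt_def] using h), if_pos h]; rfl
  · rw [if_neg (by simpa [Fin.lt_def] using h), if_neg h]; rfl

lemma snoc_val_lt {m : ℕ} {β : Type*} (g : Fin m → β) (x : β) (v : ℕ) (h1 : v < m) (h2 : v < m+1) :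
    Fin.snoc (α := fun _ => β) g x (⟨v, h2⟩ : Fin (m+1)) = g ⟨v, h1⟩ := by
  have : (⟨v, h2⟩ : Fin (m+1)) = Fin.castSucc ⟨v, h1⟩ := rfl
  rw [this, Fin.snoc_castSucc]

lemma snoc_val_last {m : ℕ} {β : Type*} (g : Fin m → β) (x : β) (h2 : m < m+1) :
    Fin.snoc (α := fun _ => β) g x (⟨m, h2⟩ : Fin (m+1)) = x := by
  have : (⟨m, h2⟩ : Fin (m+1)) = Fin.last m := rfl
  rw [this, Fin.snoc_last]

-- sum over (m+1)-tuples as sum over (m-tuple, last)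
lemma sum_snoc {β M : Type*} [Fintype β] [AddCommMonoid M] (m : ℕ)
    (f : (Fin (m+1) → β) → M) :
    ∑ g : Fin (m+1) → β, f g = ∑ g : Fin m → β, ∑ x : β, f (Fin.snoc g x) := by
  rw [← Equiv.sum_comp (Fin.snocEquiv (fun _ => β)) f]
  rw [Fintype.sum_prod_type]
  exact Finset.sum_comm

-- sum over tuples reindexed by a permutation of positions
lemma sum_comp_perm {β M : Type*} [Fintype β] [AddCommMonoid M] {m : ℕ}
    (σ : Equiv.Perm (Fin m)) (f : (Fin m → β) → M) :
    ∑ g : Fin m → β, f g = ∑ g : Fin m → β, f (g ∘ σ) := by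
  exact (Equiv.sum_comp (Equiv.arrowCongr σ.symm (Equiv.refl β)) f).symm

lemma gKron_permL {n r : ℕ} (i j : Fin r → Fin n) (σ : Equiv.Perm (Fin r)) :
    gKron (i ∘ σ) j = ((Equiv.Perm.sign σ : ℤ) : ℝ) * gKron i j := by
  have : (Matrix.of fun a b : Fin r => if (i ∘ σ) a = j b then (1:ℝ) else 0)
      = (Matrix.of fun a b : Fin r => if i a = j b then (1:ℝ) else 0).submatrix σ id := rfl
  rw [gKron, this, Matrix.det_permute]
  rfl

lemma gKron_permR {n r : ℕ} (i j : Fin r → Fin n) (σ : Equiv.Perm (Fin r)) :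
    gKron i (j ∘ σ) = ((Equiv.Perm.sign σ : ℤ) : ℝ) * gKron i j := by
  have : (Matrix.of fun a b : Fin r => if i a = (j ∘ σ) b then (1:ℝ) else 0)
      = (Matrix.of fun a b : Fin r => if i a = j b then (1:ℝ) else 0).submatrix id σ := rfl
  rw [gKron, this, Matrix.det_permute']
  rfl

-- the complement-permutation sign lemma
lemma sign_compl {N : ℕ} (τ : Equiv.Perm (Fin (N+1))) (x : Fin (N+1)) (ρ : Equiv.Perm (Fin N))
    (h : ∀ d, τ (x.succAbove d) = (τ x).succAbove (ρ d)) :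
    ((Equiv.Perm.sign τ : ℤ) : ℝ) =
      (-1) ^ ((x : ℕ) + ((τ x : Fin (N+1)) : ℕ)) * ((Equiv.Perm.sign ρ : ℤ) : ℝ) := by
  have hP : ((1 : Matrix (Fin (N+1)) (Fin (N+1)) ℝ).submatrix τ id).det
      = ((Equiv.Perm.sign τ : ℤ) : ℝ) := by
    rw [Matrix.det_permute]; simp
  rw [Matrix.det_succ_row _ x] at hP
  have hcol : ∀ b : Fin (N+1), b ≠ τ x →
      (-1:ℝ) ^ ((x:ℕ) + (b:ℕ)) * ((1 : Matrix (Fin (N+1)) (Fin (N+1)) ℝ).submatrix τ id) x b *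
        Matrix.det (((1 : Matrix (Fin (N+1)) (Fin (N+1)) ℝ).submatrix τ id).submatrix
          x.succAbove b.succAbove) = 0 := by
    intro b hb
    have : ((1 : Matrix (Fin (N+1)) (Fin (N+1)) ℝ).submatrix τ id) x b = 0 := by
      have hb' : ¬ τ x = b := fun e => hb e.symm
      simp [Matrix.submatrix_apply, Matrix.one_apply, hb']
    rw [this, mul_zero, zero_mul]
  rw [Finset.sum_eq_single (τ x) (fun b _ hb => hcol b hb) (by simp)] at hP
  have hminor : (((1 : Matrix (Fin (N+1)) (Fin (N+1)) ℝ).submatrix τ id).submatrix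
      x.succAbove (τ x).succAbove) = (1 : Matrix (Fin N) (Fin N) ℝ).submatrix ρ id := by
    ext a d
    simp only [Matrix.submatrix_apply, id, Matrix.one_apply, h a, Fin.succAbove_right_inj]
  rw [hminor, Matrix.det_permute, Matrix.det_one, mul_one] at hP
  have hxx : ((1 : Matrix (Fin (N+1)) (Fin (N+1)) ℝ).submatrix τ id) x (τ x) = 1 := by
    simp [Matrix.submatrix_apply, Matrix.one_apply]
  rw [hxx, mul_one] at hP
  exact hP.symm


lemma snoc_z_lt {M : ℕ} {β : Type*} (g : Fin M → β) (x : β) (z : Fin (M+1)) (h : z.1 < M) :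
    Fin.snoc (α := fun _ => β) g x z = g ⟨z.1, h⟩ := by
  obtain ⟨zv, hz⟩ := z
  exact Fin.snoc_castSucc (α := fun _ => β) (p := g) (x := x) (i := ⟨zv, h⟩)

lemma snoc_z_last {M : ℕ} {β : Type*} (g : Fin M → β) (x : β) (z : Fin (M+1)) (h : z.1 = M) :
    Fin.snoc (α := fun _ => β) g x z = x := by
  obtain ⟨zv, hz⟩ := z
  have h' : zv = M := h
  subst h'
  exact Fin.snoc_last (α := fun _ => β) (p := g) (x := x)

lemma snoc2_z_lt {M : ℕ} {β : Type*} (g : Fin M → β) (x y : β) (z : Fin (M+2)) (h : z.1 < M) :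
    Fin.snoc (α := fun _ => β) (Fin.snoc (α := fun _ => β) g x) y z = g ⟨z.1, h⟩ := by
  rw [snoc_z_lt _ _ z (by omega)]
  exact snoc_z_lt g x _ h

lemma snoc2_z_mid {M : ℕ} {β : Type*} (g : Fin M → β) (x y : β) (z : Fin (M+2)) (h : z.1 = M) :
    Fin.snoc (α := fun _ => β) (Fin.snoc (α := fun _ => β) g x) y z = x := by
  rw [snoc_z_lt _ _ z (by omega)]
  exact snoc_z_last g x _ h

lemma snoc2_z_last {M : ℕ} {β : Type*} (g : Fin M → β) (x y : β) (z : Fin (M+2)) (h : z.1 = M+1) :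
    Fin.snoc (α := fun _ => β) (Fin.snoc (α := fun _ => β) g x) y z = y := by
  rw [snoc_z_last _ _ z h]

lemma pairing_comm {n l : ℕ} (A : Fin l → Matrix (Fin n) (Fin n) ℝ) (i₁ j₁ i₂ j₂ : Fin n) :
    pairing A i₁ j₁ i₂ j₂ = pairing A i₂ j₂ i₁ j₁ :=
  Finset.sum_congr rfl fun _ _ => mul_comm _ _

lemma pairProd_snoc {n l : ℕ} (A : Fin l → Matrix (Fin n) (Fin n) ℝ) (s' : ℕ)
    (i' j' : Fin (2 * s') → Fin n) (a b k w : Fin n) :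
    pairProd A (s'+1) (Fin.snoc (Fin.snoc i' a) k) (Fin.snoc (Fin.snoc j' b) w)
      = pairProd A s' i' j' * pairing A a b k w := by
  unfold pairProd
  rw [Fin.prod_univ_castSucc]
  congr 1
  · apply Finset.prod_congr rfl
    intro t _
    have ht : t.1 < s' := t.isLt
    rw [snoc2_z_lt i' a k _ (by simp only [Fin.coe_castSucc]; omega)]
    rw [snoc2_z_lt j' b w _ (by simp only [Fin.coe_castSucc]; omega)]
    rw [snoc2_z_lt i' a k _ (by simp only [Fin.coe_castSucc]; omega)]
    rw [snoc2_z_lt j' b w _ (by simp only [Fin.coe_castSucc]; omega)]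
    rfl
  · rw [snoc2_z_mid i' a k _ (by simp)]
    rw [snoc2_z_mid j' b w _ (by simp)]
    rw [snoc2_z_last i' a k _ (by simp)]
    rw [snoc2_z_last j' b w _ (by simp)]


/-- the position permutation: swaps the pair `{c, c'}` with the last pair `{m, m+1}`,
sending `c ↦ m+1` and `c' ↦ m`. -/
def gfun (c m a : ℕ) : ℕ :=
  if a = c then m+1
  else if a = (if c % 2 = 0 then c+1 else c-1) then m
  else if a = m+1 then c
  else if a = m then (if c % 2 = 0 then c+1 else c-1)
  else a

lemma gfun_lt {c m a : ℕ} (hm : m % 2 = 0) (hc : c < m+2) (ha : a < m+2) :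
    gfun c m a < m+2 := by unfold gfun; split_ifs <;> omega

lemma gfun_lt' {c m a : ℕ} (hm : m % 2 = 0) (hc : c < m+2) (ha : a < m+3) :
    gfun c m a < m+3 := by unfold gfun; split_ifs <;> omega

lemma gfun_invol {c m a : ℕ} (hm : m % 2 = 0) (hc : c < m+2) (ha : a < m+3) :
    gfun c m (gfun c m a) = a := by unfold gfun; split_ifs <;> omega

def sigmaP (m : ℕ) (c : Fin (m+2)) (hm : m % 2 = 0) : Equiv.Perm (Fin (m+2)) :=
  Function.Involutive.toPerm
    (fun x => ⟨gfun c.1 m x.1, gfun_lt hm c.isLt x.isLt⟩)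
    (fun x => Fin.ext (gfun_invol hm c.isLt (by omega)))

def sigmahatP (m : ℕ) (c : Fin (m+2)) (hm : m % 2 = 0) : Equiv.Perm (Fin (m+3)) :=
  Function.Involutive.toPerm
    (fun x => ⟨gfun c.1 m x.1, gfun_lt' hm c.isLt x.isLt⟩)
    (fun x => Fin.ext (gfun_invol hm c.isLt (by omega)))

lemma sigmaP_val (m : ℕ) (c : Fin (m+2)) (hm : m % 2 = 0) (x : Fin (m+2)) :
    ((sigmaP m c hm x : Fin (m+2)) : ℕ) = gfun c.1 m x.1 := rfl

lemma sigmahatP_val (m : ℕ) (c : Fin (m+2)) (hm : m % 2 = 0) (x : Fin (m+3)) :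
    ((sigmahatP m c hm x : Fin (m+3)) : ℕ) = gfun c.1 m x.1 := rfl

lemma sigmahatP_last (m : ℕ) (c : Fin (m+2)) (hm : m % 2 = 0) :
    sigmahatP m c hm (Fin.last (m+2)) = Fin.last (m+2) := by
  apply Fin.ext
  rw [sigmahatP_val]
  show gfun c.1 m (m+2) = m+2
  have hc := c.isLt
  unfold gfun; split_ifs <;> omega

lemma sigmahatP_castSucc (m : ℕ) (c : Fin (m+2)) (hm : m % 2 = 0) (d : Fin (m+2)) :
    sigmahatP m c hm (Fin.castSucc d) = Fin.castSucc (sigmaP m c hm d) := by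
  apply Fin.ext
  rw [sigmahatP_val]
  simp [sigmaP_val]

/-- the column complement permutation, as a bare function -/
def rfunN (c m d : ℕ) : ℕ :=
  if gfun c m (if d < c then d else d+1) = m+2 then m+1
  else gfun c m (if d < c then d else d+1)

lemma rfunN_lt {c m d : ℕ} (hm : m % 2 = 0) (hc : c < m+2) (hd : d < m+2) :
    rfunN c m d < m+2 := by unfold rfunN gfun; split_ifs <;> omega

def rfunF (m : ℕ) (c : Fin (m+2)) (hm : m % 2 = 0) : Fin (m+2) → Fin (m+2) :=
  fun d => ⟨rfunN c.1 m d.1, rfunN_lt hm c.isLt d.isLt⟩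

def yhat (m : ℕ) : Fin (m+3) := Fin.castSucc (⟨m+1, by omega⟩ : Fin (m+2))

set_option maxHeartbeats 1000000 in
lemma key_nat {c m d : ℕ} (hm : m % 2 = 0) (hc : c < m+2) (hd : d < m+2) :
    gfun c m (if d < c then d else d+1)
      = if rfunN c m d < m+1 then rfunN c m d else rfunN c m d + 1 := by
  unfold rfunN gfun; split_ifs <;> omega

lemma hcomm_col (m : ℕ) (c : Fin (m+2)) (hm : m % 2 = 0) (d : Fin (m+2)) :
    sigmahatP m c hm ((Fin.castSucc c).succAbove d) = (yhat m).succAbove (rfunF m c hm d) := by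
  apply Fin.ext
  rw [sigmahatP_val, succAbove_val, succAbove_val]
  have h1 : ((Fin.castSucc c : Fin (m+3)):ℕ) = c.1 := rfl
  have h2 : ((yhat m : Fin (m+3)):ℕ) = m+1 := rfl
  have h3 : ((rfunF m c hm d : Fin (m+2)):ℕ) = rfunN c.1 m d.1 := rfl
  rw [h1, h2, h3]
  exact key_nat hm c.isLt d.isLt

lemma rfunF_inj (m : ℕ) (c : Fin (m+2)) (hm : m % 2 = 0) :
    Function.Injective (rfunF m c hm) := by
  intro d1 d2 h
  have := congrArg ((yhat m).succAbove) h
  rw [← hcomm_col, ← hcomm_col] at this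
  exact Fin.succAbove_right_injective ((sigmahatP m c hm).injective this)

def rhoP (m : ℕ) (c : Fin (m+2)) (hm : m % 2 = 0) : Equiv.Perm (Fin (m+2)) :=
  Equiv.ofBijective (rfunF m c hm) (Finite.injective_iff_bijective.mp (rfunF_inj m c hm))

lemma rhoP_apply (m : ℕ) (c : Fin (m+2)) (hm : m % 2 = 0) (d : Fin (m+2)) :
    rhoP m c hm d = rfunF m c hm d := rfl

lemma sigmahatP_cbar (m : ℕ) (c : Fin (m+2)) (hm : m % 2 = 0) :
    sigmahatP m c hm (Fin.castSucc c) = yhat m := by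
  apply Fin.ext
  rw [sigmahatP_val]
  show gfun c.1 m c.1 = m+1
  unfold gfun; rw [if_pos rfl]

lemma sign_sigma_rho (m : ℕ) (c : Fin (m+2)) (hm : m % 2 = 0) :
    ((Equiv.Perm.sign (sigmaP m c hm) : ℤ) : ℝ) * ((Equiv.Perm.sign (rhoP m c hm) : ℤ) : ℝ)
      = (-1) ^ (c.1 + m + 1) := by
  have h1 := sign_compl (sigmahatP m c hm) (Fin.last (m+2)) (sigmaP m c hm) (by
    intro d
    rw [sigmahatP_last, Fin.succAbove_last]
    exact sigmahatP_castSucc m c hm d)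
  have h2 := sign_compl (sigmahatP m c hm) (Fin.castSucc c) (rhoP m c hm) (by
    intro d
    rw [sigmahatP_cbar]
    exact hcomm_col m c hm d)
  rw [sigmahatP_last] at h1
  rw [sigmahatP_cbar] at h2
  have hv1 : ((Fin.last (m+2) : Fin (m+3)):ℕ) = m+2 := rfl
  have hv2 : ((Fin.castSucc c : Fin (m+3)):ℕ) = c.1 := rfl
  have hv3 : ((yhat m : Fin (m+3)):ℕ) = m+1 := rfl
  rw [hv1] at h1
  rw [hv2, hv3] at h2
  have he : ((-1:ℝ)) ^ (m+2 + (m+2)) = 1 := by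
    rw [← two_mul]; exact (Even.neg_one_pow ⟨m+2, by ring⟩)
  rw [he, one_mul] at h1
  set S := ((Equiv.Perm.sign (sigmahatP m c hm) : ℤ) : ℝ) with hS
  have hSS : S * S = 1 := by
    rcases Int.units_eq_one_or (Equiv.Perm.sign (sigmahatP m c hm)) with h | h <;>
      rw [hS, h] <;> norm_num
  have hsgn : ((-1:ℝ)) ^ (c.1 + (m+1)) * ((-1:ℝ)) ^ (c.1 + (m+1)) = 1 := by
    rw [← pow_add, ← two_mul]; exact (Even.neg_one_pow ⟨c.1 + (m+1), by ring⟩)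
  have hrho : ((Equiv.Perm.sign (rhoP m c hm) : ℤ) : ℝ) = ((-1:ℝ)) ^ (c.1 + (m+1)) * S := by
    have := h2
    calc ((Equiv.Perm.sign (rhoP m c hm) : ℤ) : ℝ)
        = ((-1:ℝ)) ^ (c.1 + (m+1)) * (((-1:ℝ)) ^ (c.1 + (m+1)) *
            ((Equiv.Perm.sign (rhoP m c hm) : ℤ) : ℝ)) := by
          rw [← mul_assoc, hsgn, one_mul]
      _ = ((-1:ℝ)) ^ (c.1 + (m+1)) * S := by rw [← h2]
  rw [← h1, hrho]
  calc S * (((-1:ℝ)) ^ (c.1 + (m+1)) * S) = ((-1:ℝ)) ^ (c.1 + (m+1)) * (S * S) := by ring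
    _ = ((-1:ℝ)) ^ (c.1 + (m+1)) := by rw [hSS, mul_one]
    _ = ((-1:ℝ)) ^ (c.1 + m + 1) := by ring_nf

def tswap (t0 sm t : ℕ) : ℕ := if t = t0 then sm else if t = sm then t0 else t

lemma tswap_lt {t0 sm t : ℕ} (h0 : t0 < sm+1) (ht : t < sm+1) : tswap t0 sm t < sm+1 := by
  unfold tswap; split_ifs <;> omega

lemma tswap_invol {t0 sm t : ℕ} : tswap t0 sm (tswap t0 sm t) = t := by
  unfold tswap; split_ifs <;> omega

def tauP (s' t0 : ℕ) (h0 : t0 < s'+1) : Equiv.Perm (Fin (s'+1)) :=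
  Function.Involutive.toPerm (fun t => ⟨tswap t0 s' t.1, tswap_lt h0 t.isLt⟩)
    (fun t => Fin.ext tswap_invol)

set_option maxHeartbeats 1000000 in
lemma gfun_pair {s' c t : ℕ} (hc : c < 2*s'+2) (ht : t < s'+1) :
    (gfun c (2*s') (2*t) = 2*(tswap (c/2) s' t)
        ∧ gfun c (2*s') (2*t+1) = 2*(tswap (c/2) s' t)+1)
  ∨ (gfun c (2*s') (2*t) = 2*(tswap (c/2) s' t)+1
        ∧ gfun c (2*s') (2*t+1) = 2*(tswap (c/2) s' t)) := by
  unfold gfun tswap; split_ifs <;> omega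

lemma pairProd_sigma {n l : ℕ} (A : Fin l → Matrix (Fin n) (Fin n) ℝ) (s' : ℕ)
    (c : Fin (2*s'+2)) (hm : (2*s') % 2 = 0) (I J : Fin (2*s'+2) → Fin n) :
    pairProd A (s'+1) (I ∘ (sigmaP (2*s') c hm)) (J ∘ (sigmaP (2*s') c hm))
      = pairProd A (s'+1) I J := by
  have hc := c.isLt
  have h0 : c.1/2 < s'+1 := by omega
  unfold pairProd
  apply Fintype.prod_equiv (tauP s' (c.1/2) h0)
  intro t
  have hts : tswap (c.1/2) s' t.1 < s'+1 := tswap_lt h0 t.isLt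
  have hτ : ((tauP s' (c.1/2) h0 t : Fin (s'+1)) : ℕ) = tswap (c.1/2) s' t.1 := rfl
  have happ : ∀ (K : Fin (2*s'+2) → Fin n) (v : ℕ) (hv : v < 2*(s'+1)) (w : ℕ)
      (hw : w < 2*(s'+1)) (he : gfun c.1 (2*s') v = w),
      (K ∘ (sigmaP (2*s') c hm)) ⟨v, hv⟩ = K ⟨w, hw⟩ := by
    intro K v hv w hw he
    show K (sigmaP (2*s') c hm ⟨v, hv⟩) = _
    congr 1
    exact Fin.ext (by rw [sigmaP_val]; exact he)
  rcases gfun_pair (c := c.1) (t := t.1) hc t.isLt with ⟨h1, h2⟩ | ⟨h1, h2⟩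
  · rw [happ I _ _ _ (by omega) h1]
    rw [happ J _ _ _ (by omega) h1]
    rw [happ I _ _ _ (by omega) h2]
    rw [happ J _ _ _ (by omega) h2]
    rfl
  · rw [happ I _ _ _ (by omega) h1]
    rw [happ J _ _ _ (by omega) h1]
    rw [happ I _ _ _ (by omega) h2]
    rw [happ J _ _ _ (by omega) h2]
    exact pairing_comm A _ _ _ _

lemma snoc_comp {n : ℕ} (m : ℕ) (c : Fin (m+2)) (hm : m % 2 = 0)
    (J : Fin (m+2) → Fin n) (u : Fin n) (z : Fin (m+3)) :
    Fin.snoc (α := fun _ => Fin n) (J ∘ (sigmaP m c hm)) u z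
      = Fin.snoc (α := fun _ => Fin n) J u (sigmahatP m c hm z) := by
  by_cases hz : z.1 < m+2
  · have hg : gfun c.1 m z.1 < m+2 := gfun_lt hm c.isLt hz
    rw [snoc_z_lt _ _ z hz]
    have e2 : sigmahatP m c hm z = ⟨gfun c.1 m z.1, by omega⟩ :=
      Fin.ext (sigmahatP_val m c hm z)
    rw [e2, snoc_z_lt _ _ _ hg]
    show J (sigmaP m c hm ⟨z.1, hz⟩) = J ⟨gfun c.1 m z.1, hg⟩
    first
    | rfl
    | (congr 1; exact Fin.ext (sigmaP_val m c hm ⟨z.1, hz⟩))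
  · have hz2 : z.1 = m+2 := by omega
    rw [snoc_z_last _ _ z hz2, show z = Fin.last (m+2) from Fin.ext hz2,
      sigmahatP_last, Fin.snoc_last]

lemma cols_snoc {n m : ℕ} (j' : Fin m → Fin n) (b w u : Fin n) :
    (fun d : Fin (m+2) => Fin.snoc (α := fun _ => Fin n)
        (Fin.snoc (Fin.snoc j' b) w) u ((yhat m).succAbove d))
      = Fin.snoc (Fin.snoc j' b) u := by
  funext d
  have hval : (((yhat m).succAbove d : Fin (m+3)) : ℕ)
      = if d.1 < m+1 then d.1 else d.1+1 := succAbove_val _ _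
  rcases lt_trichotomy d.1 m with h1 | h1 | h1
  · have hz : (yhat m).succAbove d = ⟨d.1, by omega⟩ :=
      Fin.ext (by rw [hval, if_pos (by omega)])
    rw [hz, snoc_z_lt (Fin.snoc (Fin.snoc j' b) w) u _ (show d.1 < m+2 by omega)]
    rw [snoc2_z_lt j' b w _ (show d.1 < m from h1)]
    rw [snoc2_z_lt j' b u d h1]
  · have hz : (yhat m).succAbove d = ⟨m, by omega⟩ :=
      Fin.ext (by rw [hval, if_pos (by omega), h1])
    rw [hz, snoc_z_lt (Fin.snoc (Fin.snoc j' b) w) u _ (show m < m+2 by omega)]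
    rw [snoc2_z_mid j' b w _ rfl]
    rw [snoc2_z_mid j' b u d h1]
  · have h2 : d.1 = m+1 := by omega
    have hz : (yhat m).succAbove d = ⟨m+2, by omega⟩ :=
      Fin.ext (by rw [hval, if_neg (by omega), h2])
    rw [hz, snoc_z_last (Fin.snoc (Fin.snoc j' b) w) u _ rfl]
    rw [snoc2_z_last j' b u d h2]

lemma core_det {n : ℕ} (m : ℕ) (hm : m % 2 = 0) (c : Fin (m+2))
    (I J : Fin (m+2) → Fin n) (u : Fin n) :
    (-1:ℝ)^(m+2+c.1) * gKron (I ∘ (sigmaP m c hm))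
        (fun d => Fin.snoc (α := fun _ => Fin n) (J ∘ (sigmaP m c hm)) u
          ((Fin.castSucc c).succAbove d))
      = - gKron I (fun d => Fin.snoc (α := fun _ => Fin n) J u ((yhat m).succAbove d)) := by
  have hcols : (fun d => Fin.snoc (α := fun _ => Fin n) (J ∘ (sigmaP m c hm)) u
        ((Fin.castSucc c).succAbove d))
      = (fun d => Fin.snoc (α := fun _ => Fin n) J u ((yhat m).succAbove d))
          ∘ (rhoP m c hm) := by
    funext d
    show Fin.snoc (α := fun _ => Fin n) (J ∘ (sigmaP m c hm)) u ((Fin.castSucc c).succAbove d)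
      = Fin.snoc (α := fun _ => Fin n) J u ((yhat m).succAbove (rhoP m c hm d))
    rw [snoc_comp, hcomm_col]
    rfl
  rw [hcols, gKron_permR, gKron_permL]
  set G := gKron I (fun d => Fin.snoc (α := fun _ => Fin n) J u ((yhat m).succAbove d)) with hG
  have hsr := sign_sigma_rho m c hm
  have hcomb : (-1:ℝ)^(m+2+c.1) * ((-1:ℝ)^(c.1+m+1)) = -1 := by
    rw [← pow_add]
    exact Odd.neg_one_pow ⟨m+c.1+1, by ring⟩
  linear_combination (((-1:ℝ)^(m+2+c.1)) * G) * hsr + G * hcomb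

lemma double_sum_perm {β M : Type*} [Fintype β] [AddCommMonoid M] {m : ℕ}
    (σ : Equiv.Perm (Fin m)) (F : (Fin m → β) → (Fin m → β) → M) :
    ∑ i : Fin m → β, ∑ j : Fin m → β, F i j
      = ∑ i : Fin m → β, ∑ j : Fin m → β, F (i ∘ σ) (j ∘ σ) := by
  rw [sum_comp_perm σ (fun i => ∑ j : Fin m → β, F i j)]
  exact Finset.sum_congr rfl fun I _ => sum_comp_perm σ (fun j => F (I ∘ σ) j)

lemma sum_snoc2 {β M : Type*} [Fintype β] [AddCommMonoid M] (m : ℕ)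
    (f : (Fin (m+2) → β) → M) :
    ∑ g : Fin (m+2) → β, f g
      = ∑ g : Fin m → β, ∑ x : β, ∑ y : β, f (Fin.snoc (Fin.snoc g x) y) := by
  calc ∑ g : Fin (m+2) → β, f g
      = ∑ g : Fin (m+1) → β, ∑ y : β, f (Fin.snoc g y) := sum_snoc (m+1) f
    _ = ∑ g : Fin m → β, ∑ x : β, ∑ y : β, f (Fin.snoc (Fin.snoc g x) y) :=
        sum_snoc m (fun g => ∑ y : β, f (Fin.snoc g y))

lemma per_c {n l : ℕ} (A : Fin l → Matrix (Fin n) (Fin n) ℝ) (s' : ℕ) (p u : Fin n)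
    (hm : (2*s') % 2 = 0) (c : Fin (2*s'+2)) :
    (∑ i : Fin (2*s'+2) → Fin n, ∑ j : Fin (2*s'+2) → Fin n,
      (if p = j c then (1:ℝ) else 0)
        * ((-1:ℝ)^(2*s'+2+c.1) * gKron i (fun d : Fin (2*s'+2) =>
            Fin.snoc (α := fun _ => Fin n) j u ((Fin.castSucc c).succAbove d)))
        * pairProd A (s'+1) i j)
    = - ∑ i' : Fin (2*s') → Fin n, ∑ a : Fin n, ∑ k : Fin n,
        ∑ j' : Fin (2*s') → Fin n, ∑ b : Fin n,
        gKron (Fin.snoc (Fin.snoc i' a) k) (Fin.snoc (Fin.snoc j' b) u)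
          * pairProd A s' i' j' * pairing A k p a b := by
  have hσc : ∀ J : Fin (2*s'+2) → Fin n,
      (J ∘ (sigmaP (2*s') c hm)) c = J ⟨2*s'+1, by omega⟩ := by
    intro J
    show J (sigmaP (2*s') c hm c) = _
    congr 1
    apply Fin.ext
    rw [sigmaP_val]
    show gfun c.1 (2*s') c.1 = 2*s'+1
    unfold gfun
    rw [if_pos rfl]
  rw [double_sum_perm (sigmaP (2*s') c hm)]
  have step : ∀ I J : Fin (2*s'+2) → Fin n,
      (if p = (J ∘ (sigmaP (2*s') c hm)) c then (1:ℝ) else 0)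
        * ((-1:ℝ)^(2*s'+2+c.1) * gKron (I ∘ (sigmaP (2*s') c hm))
            (fun d : Fin (2*s'+2) => Fin.snoc (α := fun _ => Fin n)
              (J ∘ (sigmaP (2*s') c hm)) u ((Fin.castSucc c).succAbove d)))
        * pairProd A (s'+1) (I ∘ (sigmaP (2*s') c hm)) (J ∘ (sigmaP (2*s') c hm))
      = - ((if p = J ⟨2*s'+1, by omega⟩ then (1:ℝ) else 0)
        * gKron I (fun d : Fin (2*s'+2) => Fin.snoc (α := fun _ => Fin n) J u
            ((yhat (2*s')).succAbove d))
        * pairProd A (s'+1) I J) := by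
    intro I J
    rw [hσc J, core_det (2*s') hm c I J u, pairProd_sigma A s' c hm I J]
    ring
  trans (∑ I : Fin (2*s'+2) → Fin n, ∑ J : Fin (2*s'+2) → Fin n,
      -((if p = J ⟨2*s'+1, by omega⟩ then (1:ℝ) else 0)
        * gKron I (fun d : Fin (2*s'+2) => Fin.snoc (α := fun _ => Fin n) J u
            ((yhat (2*s')).succAbove d))
        * pairProd A (s'+1) I J))
  · exact Finset.sum_congr rfl fun I _ => Finset.sum_congr rfl fun J _ => step I J
  simp only [Finset.sum_neg_distrib]
  congr 1
  trans (∑ i' : Fin (2*s') → Fin n, ∑ a : Fin n, ∑ k : Fin n,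
      ∑ J : Fin (2*s'+2) → Fin n,
      ((if p = J ⟨2*s'+1, by omega⟩ then (1:ℝ) else 0)
        * gKron (Fin.snoc (Fin.snoc i' a) k) (fun d : Fin (2*s'+2) =>
            Fin.snoc (α := fun _ => Fin n) J u ((yhat (2*s')).succAbove d))
        * pairProd A (s'+1) (Fin.snoc (Fin.snoc i' a) k) J))
  · exact sum_snoc2 (2*s') _
  refine Finset.sum_congr rfl fun i' _ => Finset.sum_congr rfl fun a _ =>
    Finset.sum_congr rfl fun k _ => ?_
  trans (∑ j' : Fin (2*s') → Fin n, ∑ b : Fin n, ∑ w : Fin n,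
      ((if p = (Fin.snoc (Fin.snoc j' b) w : Fin (2*s'+2) → Fin n) ⟨2*s'+1, by omega⟩
          then (1:ℝ) else 0)
        * gKron (Fin.snoc (Fin.snoc i' a) k) (fun d : Fin (2*s'+2) =>
            Fin.snoc (α := fun _ => Fin n) (Fin.snoc (Fin.snoc j' b) w) u
              ((yhat (2*s')).succAbove d))
        * pairProd A (s'+1) (Fin.snoc (Fin.snoc i' a) k) (Fin.snoc (Fin.snoc j' b) w)))
  · exact sum_snoc2 (2*s') _
  refine Finset.sum_congr rfl fun j' _ => Finset.sum_congr rfl fun b _ => ?_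
  trans (∑ w : Fin n, (if p = w then (1:ℝ) else 0)
      * (gKron (Fin.snoc (Fin.snoc i' a) k) (Fin.snoc (Fin.snoc j' b) u)
        * (pairProd A s' i' j' * pairing A a b k w)))
  · refine Finset.sum_congr rfl fun w _ => ?_
    rw [snoc2_z_last j' b w _ rfl]
    rw [cols_snoc j' b w u]
    rw [pairProd_snoc A s' i' j' a b k w]
    ring
  simp only [ite_mul, one_mul, zero_mul]
  rw [Finset.sum_ite_eq]
  simp only [Finset.mem_univ, if_pos]
  rw [pairing_comm A a b k p]
  ring

lemma minor_last {n m : ℕ} (i j : Fin (m+2) → Fin n) (p u : Fin n) :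
    ((Matrix.of fun a b : Fin (m+2+1) =>
        if Fin.snoc (α := fun _ => Fin n) i p a = Fin.snoc (α := fun _ => Fin n) j u b then (1:ℝ) else 0).submatrix
        (Fin.last (m+2)).succAbove (Fin.last (m+2)).succAbove).det = gKron i j := by
  unfold gKron
  congr 1
  ext a d
  simp [Matrix.submatrix_apply, Fin.succAbove_last, Fin.snoc_castSucc]

lemma minor_c {n m : ℕ} (i j : Fin (m+2) → Fin n) (p u : Fin n) (c : Fin (m+2)) :
    ((Matrix.of fun a b : Fin (m+2+1) =>
        if Fin.snoc (α := fun _ => Fin n) i p a = Fin.snoc (α := fun _ => Fin n) j u b then (1:ℝ) else 0).submatrix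
        (Fin.last (m+2)).succAbove (Fin.castSucc c).succAbove).det
      = gKron i (fun d : Fin (m+2) =>
          Fin.snoc (α := fun _ => Fin n) j u ((Fin.castSucc c).succAbove d)) := by
  unfold gKron
  congr 1
  ext a d
  simp [Matrix.submatrix_apply, Fin.succAbove_last, Fin.snoc_castSucc]

lemma gKron_expand {n m : ℕ} (i j : Fin (m+2) → Fin n) (p u : Fin n) :
    gKron (Fin.snoc i p) (Fin.snoc j u)
      = (if p = u then (1:ℝ) else 0) * gKron i j
        + ∑ c : Fin (m+2), (if p = j c then (1:ℝ) else 0)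
            * ((-1:ℝ)^(m+2+c.1) * gKron i (fun d : Fin (m+2) =>
                Fin.snoc (α := fun _ => Fin n) j u ((Fin.castSucc c).succAbove d))) := by
  have expand := Matrix.det_succ_row (Matrix.of fun a b : Fin (m+2+1) =>
      if Fin.snoc (α := fun _ => Fin n) i p a = Fin.snoc (α := fun _ => Fin n) j u b then (1:ℝ) else 0) (Fin.last (m+2))
  have hL : gKron (Fin.snoc i p) (Fin.snoc j u)
      = (Matrix.of fun a b : Fin (m+2+1) =>
        if Fin.snoc (α := fun _ => Fin n) i p a = Fin.snoc (α := fun _ => Fin n) j u b then (1:ℝ) else 0).det := rfl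
  rw [hL, expand, Fin.sum_univ_castSucc, add_comm]
  congr 1
  · -- last term
    rw [minor_last]
    have h1 : ((Fin.last (m+2) : Fin (m+2+1)) : ℕ) = m+2 := rfl
    rw [h1]
    have h2 : (-1:ℝ)^(m+2+(m+2)) = 1 := Even.neg_one_pow ⟨m+2, by ring⟩
    rw [h2]
    simp only [Matrix.of_apply, Fin.snoc_last]
    ring
  · -- the c-sum
    refine Finset.sum_congr rfl fun c _ => ?_
    rw [minor_c]
    have h1 : ((Fin.last (m+2) : Fin (m+2+1)) : ℕ) = m+2 := rfl
    have h2 : ((Fin.castSucc c : Fin (m+2+1)) : ℕ) = c.1 := rfl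
    rw [h1, h2]
    simp only [Matrix.of_apply, Fin.snoc_last, Fin.snoc_castSucc]
    ring

lemma sum6_reorder {A1 A2 A3 A4 A5 A6 : Type*} [Fintype A1] [Fintype A2] [Fintype A3]
    [Fintype A4] [Fintype A5] [Fintype A6] (f : A1 → A2 → A3 → A4 → A5 → A6 → ℝ) :
    ∑ x1 : A1, ∑ x2 : A2, ∑ x3 : A3, ∑ x4 : A4, ∑ x5 : A5, ∑ x6 : A6, f x1 x2 x3 x4 x5 x6
      = ∑ x3 : A3, ∑ x5 : A5, ∑ x2 : A2, ∑ x4 : A4, ∑ x6 : A6, ∑ x1 : A1,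
          f x1 x2 x3 x4 x5 x6 := by
  conv_lhs => enter [2, x1]; rw [Finset.sum_comm]
  rw [Finset.sum_comm]
  conv_lhs => enter [2, x3, 2, x1, 2, x2]; rw [Finset.sum_comm]
  conv_lhs => enter [2, x3, 2, x1]; rw [Finset.sum_comm]
  conv_lhs => enter [2, x3]; rw [Finset.sum_comm]
  conv_lhs => enter [2, x3, 2, x5]; rw [Finset.sum_comm]
  conv_lhs => enter [2, x3, 2, x5, 2, x2]; rw [Finset.sum_comm]
  conv_lhs => enter [2, x3, 2, x5, 2, x2, 2, x4]; rw [Finset.sum_comm]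

lemma rhs_unfold {n l : ℕ} (A : Fin l → Matrix (Fin n) (Fin n) ℝ) (s' : ℕ) (p u : Fin n) :
    ∑ α : Fin l, (A α * newtonOdd A s' α) p u
      = (1 / (Nat.factorial (2*s'+1) : ℝ)) *
        ∑ i' : Fin (2*s') → Fin n, ∑ a : Fin n, ∑ k : Fin n,
          ∑ j' : Fin (2*s') → Fin n, ∑ b : Fin n,
          gKron (Fin.snoc (Fin.snoc i' a) k) (Fin.snoc (Fin.snoc j' b) u)
            * pairProd A s' i' j' * pairing A k p a b := by
  simp only [Matrix.mul_apply, newtonOdd, Matrix.of_apply]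
  trans (∑ α : Fin l, ∑ k : Fin n, ∑ i' : Fin (2*s') → Fin n, ∑ j' : Fin (2*s') → Fin n,
      ∑ a : Fin n, ∑ b : Fin n,
      (1 / (Nat.factorial (2*s'+1) : ℝ)) * (A α p k
        * (gKron (Fin.snoc (Fin.snoc i' a) k) (Fin.snoc (Fin.snoc j' b) u)
          * pairProd A s' i' j' * A α b a)))
  · refine Finset.sum_congr rfl fun α _ => Finset.sum_congr rfl fun k _ => ?_
    simp only [Finset.mul_sum]
    refine Finset.sum_congr rfl fun i' _ => Finset.sum_congr rfl fun j' _ =>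
      Finset.sum_congr rfl fun a _ => Finset.sum_congr rfl fun b _ => by ring
  rw [sum6_reorder (fun (α : Fin l) (k : Fin n) (i' : Fin (2*s') → Fin n)
      (j' : Fin (2*s') → Fin n) (a : Fin n) (b : Fin n) =>
      (1 / (Nat.factorial (2*s'+1) : ℝ)) * (A α p k
        * (gKron (Fin.snoc (Fin.snoc i' a) k) (Fin.snoc (Fin.snoc j' b) u)
          * pairProd A s' i' j' * A α b a)))]
  simp only [Finset.mul_sum]
  refine Finset.sum_congr rfl fun i' _ => Finset.sum_congr rfl fun a _ =>
    Finset.sum_congr rfl fun k _ => Finset.sum_congr rfl fun j' _ =>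
    Finset.sum_congr rfl fun b _ => ?_
  unfold pairing
  simp only [Finset.mul_sum]
  exact Finset.sum_congr rfl fun α _ => by ring


/-- For every even integer `r` with `2 ≤ r ≤ n`,
`T_r = S_r · I − Σ_{α=1}^{l} A^α T_{r−1}^{α}`.
Here `r = 2 * s` and `T_{r-1}^α = newtonOdd A (s-1) α` (since `r - 1 = 2*(s-1) + 1`). -/
theorem stmt3 (n l : ℕ) (hn : 1 ≤ n) (hl : 1 ≤ l)
    (A : Fin l → Matrix (Fin n) (Fin n) ℝ) (r s : ℕ) (hr : r = 2 * s)
    (hr2 : 2 ≤ r) (hrn : r ≤ n) :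
    newton A s = meanCurv A s • (1 : Matrix (Fin n) (Fin n) ℝ)
      - ∑ α : Fin l, A α * newtonOdd A (s - 1) α := by
  obtain ⟨s', rfl⟩ : ∃ s'', s = s'' + 1 := ⟨s - 1, by omega⟩
  have hm : (2*s') % 2 = 0 := by omega
  ext p u
  rw [Matrix.sub_apply, Matrix.smul_apply, Matrix.one_apply, smul_eq_mul, Matrix.sum_apply]
  simp only [Nat.add_sub_cancel]
  rw [rhs_unfold A s' p u]
  show (1 / (Nat.factorial (2*(s'+1)) : ℝ)) *
      (∑ i : Fin (2*s'+2) → Fin n, ∑ j : Fin (2*s'+2) → Fin n,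
        gKron (Fin.snoc (α := fun _ => Fin n) i p) (Fin.snoc (α := fun _ => Fin n) j u)
          * pairProd A (s'+1) i j)
    = meanCurv A (s'+1) * (if p = u then (1:ℝ) else 0)
      - (1 / (Nat.factorial (2*s'+1) : ℝ)) *
        ∑ i' : Fin (2*s') → Fin n, ∑ a : Fin n, ∑ k : Fin n,
          ∑ j' : Fin (2*s') → Fin n, ∑ b : Fin n,
          gKron (Fin.snoc (Fin.snoc i' a) k) (Fin.snoc (Fin.snoc j' b) u)
            * pairProd A s' i' j' * pairing A k p a b
  have hMC : meanCurv A (s'+1)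
      = (1 / (Nat.factorial (2*(s'+1)) : ℝ)) *
        ∑ i : Fin (2*s'+2) → Fin n, ∑ j : Fin (2*s'+2) → Fin n,
          gKron i j * pairProd A (s'+1) i j := rfl
  have expand : (∑ i : Fin (2*s'+2) → Fin n, ∑ j : Fin (2*s'+2) → Fin n,
      gKron (Fin.snoc (α := fun _ => Fin n) i p) (Fin.snoc (α := fun _ => Fin n) j u)
        * pairProd A (s'+1) i j)
    = (if p = u then (1:ℝ) else 0) * (∑ i : Fin (2*s'+2) → Fin n,
        ∑ j : Fin (2*s'+2) → Fin n, gKron i j * pairProd A (s'+1) i j)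
      + ∑ c : Fin (2*s'+2), ∑ i : Fin (2*s'+2) → Fin n, ∑ j : Fin (2*s'+2) → Fin n,
          (if p = j c then (1:ℝ) else 0)
            * ((-1:ℝ)^(2*s'+2+c.1) * gKron i (fun d : Fin (2*s'+2) =>
                Fin.snoc (α := fun _ => Fin n) j u ((Fin.castSucc c).succAbove d)))
            * pairProd A (s'+1) i j := by
    trans (∑ i : Fin (2*s'+2) → Fin n, ∑ j : Fin (2*s'+2) → Fin n,
        ((if p = u then (1:ℝ) else 0) * gKron i j
          + ∑ c : Fin (2*s'+2), (if p = j c then (1:ℝ) else 0)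
            * ((-1:ℝ)^(2*s'+2+c.1) * gKron i (fun d : Fin (2*s'+2) =>
                Fin.snoc (α := fun _ => Fin n) j u ((Fin.castSucc c).succAbove d))))
          * pairProd A (s'+1) i j)
    · exact Finset.sum_congr rfl fun i _ => Finset.sum_congr rfl fun j _ => by
        rw [gKron_expand (m := 2*s') i j p u]
    trans (∑ i : Fin (2*s'+2) → Fin n, ∑ j : Fin (2*s'+2) → Fin n,
        ((if p = u then (1:ℝ) else 0) * (gKron i j * pairProd A (s'+1) i j)
        + ∑ c : Fin (2*s'+2), (if p = j c then (1:ℝ) else 0)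
            * ((-1:ℝ)^(2*s'+2+c.1) * gKron i (fun d : Fin (2*s'+2) =>
                Fin.snoc (α := fun _ => Fin n) j u ((Fin.castSucc c).succAbove d)))
            * pairProd A (s'+1) i j))
    · refine Finset.sum_congr rfl fun i _ => Finset.sum_congr rfl fun j _ => ?_
      rw [add_mul, Finset.sum_mul, mul_assoc]
    simp only [Finset.sum_add_distrib]
    congr 1
    · simp only [← Finset.mul_sum]
    · conv_lhs => enter [2, i]; rw [Finset.sum_comm]
      rw [Finset.sum_comm]
  rw [expand, hMC]
  have hsum : (∑ c : Fin (2*s'+2), ∑ i : Fin (2*s'+2) → Fin n, ∑ j : Fin (2*s'+2) → Fin n,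
      (if p = j c then (1:ℝ) else 0)
        * ((-1:ℝ)^(2*s'+2+c.1) * gKron i (fun d : Fin (2*s'+2) =>
            Fin.snoc (α := fun _ => Fin n) j u ((Fin.castSucc c).succAbove d)))
        * pairProd A (s'+1) i j)
    = ((2*s'+2 : ℕ) : ℝ) * (- ∑ i' : Fin (2*s') → Fin n, ∑ a : Fin n, ∑ k : Fin n,
        ∑ j' : Fin (2*s') → Fin n, ∑ b : Fin n,
        gKron (Fin.snoc (Fin.snoc i' a) k) (Fin.snoc (Fin.snoc j' b) u)
          * pairProd A s' i' j' * pairing A k p a b) := by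
    calc _ = ∑ _c : Fin (2*s'+2), (- ∑ i' : Fin (2*s') → Fin n, ∑ a : Fin n, ∑ k : Fin n,
        ∑ j' : Fin (2*s') → Fin n, ∑ b : Fin n,
        gKron (Fin.snoc (Fin.snoc i' a) k) (Fin.snoc (Fin.snoc j' b) u)
          * pairProd A s' i' j' * pairing A k p a b) :=
          Finset.sum_congr rfl fun c _ => per_c A s' p u hm c
      _ = _ := by
          rw [Finset.sum_const, Finset.card_univ, Fintype.card_fin, nsmul_eq_mul]
  rw [hsum]
  have hfacN : Nat.factorial (2*(s'+1)) = (2*s'+2) * Nat.factorial (2*s'+1) := by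
    rw [show 2*(s'+1) = (2*s'+1)+1 by ring]
    rw [Nat.factorial_succ]
  rw [hfacN, Nat.cast_mul]
  have h2 : ((Nat.factorial (2*s'+1) : ℕ) : ℝ) ≠ 0 :=
    Nat.cast_ne_zero.mpr (Nat.factorial_ne_zero _)
  have h1 : ((2*s'+2 : ℕ) : ℝ) ≠ 0 := by positivity
  have key : ∀ X S NF : ℝ,
      (1/(((2*s'+2:ℕ):ℝ) * ((Nat.factorial (2*s'+1) : ℕ) : ℝ)))
          * (X*S + ((2*s'+2:ℕ):ℝ)*(-NF))
        = (1/(((2*s'+2:ℕ):ℝ) * ((Nat.factorial (2*s'+1) : ℕ) : ℝ)))*S*X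
          - (1/((Nat.factorial (2*s'+1) : ℕ) : ℝ))*NF := by
    intro X S NF
    field_simp
    ring
  exact key _ _ _
end
end

section
/- For every odd integer q with 1 ≤ q ≤ n and every α ∈ {1,…,l}, Tr(T_q^α) = ((n − q)/q) · Tr(T_{q−1} A^α). -/
open scoped BigOperators

noncomputable section

open Equiv Equiv.Perm in
lemma sum_gKron_cons {n r : ℕ} (i j : Fin r → Fin n) :
    ∑ p : Fin n, gKron (Fin.cons p i) (Fin.cons p j) = ((n:ℝ) - r) * gKron i j := by
  classical
  have hdet : ∀ p : Fin n, gKron (Fin.cons p i) (Fin.cons p j)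
      = ∑ cτ : Fin (r+1) × Perm (Fin r),
          ((sign (decomposeFin.symm cτ) : ℤ) : ℝ) *
            ∏ x : Fin (r+1),
              (if (Fin.cons p i : Fin (r+1) → Fin n) (decomposeFin.symm cτ x)
                  = (Fin.cons p j : Fin (r+1) → Fin n) x then (1:ℝ) else 0) := by
    intro p
    rw [gKron, Matrix.det_apply']
    exact (Equiv.sum_comp Equiv.Perm.decomposeFin.symm _).symm
  simp_rw [hdet]
  rw [Finset.sum_comm, Fintype.sum_prod_type, Fin.sum_univ_succ]
  have piece0 : ∀ τ : Perm (Fin r), ∀ p : Fin n,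
      ((sign (decomposeFin.symm ((0 : Fin (r+1)), τ)) : ℤ) : ℝ) *
        ∏ x : Fin (r+1),
          (if (Fin.cons p i : Fin (r+1) → Fin n) (decomposeFin.symm (0, τ) x)
              = (Fin.cons p j : Fin (r+1) → Fin n) x then (1:ℝ) else 0)
      = ((sign τ : ℤ) : ℝ) * ∏ a : Fin r, (if i (τ a) = j a then (1:ℝ) else 0) := by
    intro τ p
    rw [Fin.prod_univ_succ]
    simp [Equiv.Perm.decomposeFin.symm_sign, Equiv.Perm.decomposeFin_symm_apply_zero,
      Equiv.Perm.decomposeFin_symm_apply_succ]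
  have pieceS : ∀ (d : Fin r) (τ : Perm (Fin r)),
      (∑ p : Fin n,
        ((sign (decomposeFin.symm ((Fin.succ d : Fin (r+1)), τ)) : ℤ) : ℝ) *
          ∏ x : Fin (r+1),
            (if (Fin.cons p i : Fin (r+1) → Fin n) (decomposeFin.symm (Fin.succ d, τ) x)
                = (Fin.cons p j : Fin (r+1) → Fin n) x then (1:ℝ) else 0))
      = -(((sign τ : ℤ) : ℝ) * ∏ a : Fin r, (if i (τ a) = j a then (1:ℝ) else 0)) := by
    intro d τ
    rw [Finset.sum_eq_single (i d)]
    · rw [Fin.prod_univ_succ]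
      have h0 : (if (Fin.cons (i d) i : Fin (r+1) → Fin n) (decomposeFin.symm (Fin.succ d, τ) 0)
          = (Fin.cons (i d) j : Fin (r+1) → Fin n) 0 then (1:ℝ) else 0) = 1 := by
        simp [Equiv.Perm.decomposeFin_symm_apply_zero]
      rw [h0, one_mul]
      have hsign : ((sign (decomposeFin.symm ((Fin.succ d : Fin (r+1)), τ)) : ℤ) : ℝ)
          = -((sign τ : ℤ) : ℝ) := by
        rw [Equiv.Perm.decomposeFin.symm_sign]
        simp [Fin.succ_ne_zero]
      rw [hsign]
      have hprod : (∏ a : Fin r,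
          if (Fin.cons (i d) i : Fin (r+1) → Fin n) (decomposeFin.symm (Fin.succ d, τ) (Fin.succ a))
              = (Fin.cons (i d) j : Fin (r+1) → Fin n) (Fin.succ a) then (1:ℝ) else 0)
          = ∏ a : Fin r, (if i (τ a) = j a then (1:ℝ) else 0) := by
        refine Finset.prod_congr rfl fun a _ => ?_
        rw [Equiv.Perm.decomposeFin_symm_apply_succ]
        by_cases h : τ a = d
        · rw [h, Equiv.swap_apply_right]
          simp [h]
        · rw [Equiv.swap_apply_of_ne_of_ne (Fin.succ_ne_zero _)
            (fun h' => h (Fin.succ_injective _ h'))]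
          simp
      rw [hprod]; ring
    · intro p _ hp
      have h0 : (if (Fin.cons p i : Fin (r+1) → Fin n) (decomposeFin.symm (Fin.succ d, τ) 0)
          = (Fin.cons p j : Fin (r+1) → Fin n) 0 then (1:ℝ) else 0) = 0 := by
        rw [Equiv.Perm.decomposeFin_symm_apply_zero]
        simp [Ne.symm hp]
      rw [Fin.prod_univ_succ, h0, zero_mul, mul_zero]
    · intro h; exact absurd (Finset.mem_univ _) h
  simp_rw [piece0, pieceS]
  simp only [Finset.sum_const, Finset.card_univ, Fintype.card_fin, nsmul_eq_mul, smul_neg]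
  rw [gKron, Matrix.det_apply']
  simp only [Matrix.of_apply, sub_mul, Finset.sum_sub_distrib, Finset.mul_sum, mul_assoc, mul_neg, Finset.sum_neg_distrib, ← sub_eq_add_neg]

lemma gKron_snoc_snoc_s4 {n r : ℕ} (i j : Fin r → Fin n) (p u : Fin n) :
    gKron (Fin.snoc i p) (Fin.snoc j u) = gKron (Fin.cons p i) (Fin.cons u j) := by
  unfold gKron
  conv_rhs => rw [← Matrix.det_submatrix_equiv_self (finRotate (r+1))]
  congr 1
  ext a b
  simp [Fin.snoc_eq_cons_rotate]

lemma sum_gKron_snoc {n r : ℕ} (i j : Fin r → Fin n) :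
    ∑ p : Fin n, gKron (Fin.snoc i p) (Fin.snoc j p) = ((n:ℝ) - r) * gKron i j := by
  simp_rw [gKron_snoc_snoc_s4]
  exact sum_gKron_cons i j

lemma swap3 {M : Type*} [AddCommMonoid M] {A C D : Type*} [Fintype A] [Fintype C] [Fintype D]
    (f : A → C → D → M) :
    ∑ a : A, ∑ c : C, ∑ d : D, f a c d = ∑ c : C, ∑ d : D, ∑ a : A, f a c d := by
  rw [Finset.sum_comm]
  exact Finset.sum_congr rfl fun c _ => Finset.sum_comm

lemma swap4 {M : Type*} [AddCommMonoid M] {A B C D : Type*}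
    [Fintype A] [Fintype B] [Fintype C] [Fintype D] (f : A → B → C → D → M) :
    ∑ a : A, ∑ b : B, ∑ c : C, ∑ d : D, f a b c d
      = ∑ c : C, ∑ d : D, ∑ a : A, ∑ b : B, f a b c d :=
  (Finset.sum_congr rfl fun a _ => swap3 (f a)).trans (swap3 _)

lemma swap5 {M : Type*} [AddCommMonoid M] {P A B C D : Type*}
    [Fintype P] [Fintype A] [Fintype B] [Fintype C] [Fintype D]
    (f : P → A → B → C → D → M) :
    ∑ p : P, ∑ a : A, ∑ b : B, ∑ c : C, ∑ d : D, f p a b c d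
      = ∑ a : A, ∑ b : B, ∑ c : C, ∑ d : D, ∑ p : P, f p a b c d := by
  rw [Finset.sum_comm]
  refine Finset.sum_congr rfl fun a _ => ?_
  rw [Finset.sum_comm]
  refine Finset.sum_congr rfl fun b _ => ?_
  rw [Finset.sum_comm]
  refine Finset.sum_congr rfl fun c _ => ?_
  rw [Finset.sum_comm]

/-- For every odd integer `q` with `1 ≤ q ≤ n` and every `α`,
`Tr(T_q^α) = ((n − q)/q) · Tr(T_{q−1} A^α)`. Here `q = 2 * s + 1`, so
`T_q^α = newtonOdd A s α` and `T_{q-1} = newton A s`. -/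
theorem stmt4 (n l : ℕ) (hn : 1 ≤ n) (hl : 1 ≤ l)
    (A : Fin l → Matrix (Fin n) (Fin n) ℝ) (q s : ℕ) (hq : q = 2 * s + 1)
    (hq1 : 1 ≤ q) (hqn : q ≤ n) (α : Fin l) :
    (newtonOdd A s α).trace = (((n : ℝ) - (q : ℝ)) / (q : ℝ)) * (newton A s * A α).trace := by
  subst hq
  have h1 : (newtonOdd A s α).trace
      = ∑ i : Fin (2 * s) → Fin n, ∑ j : Fin (2 * s) → Fin n, ∑ a : Fin n, ∑ b : Fin n,
          (((n:ℝ) - (2*s+1 : ℕ)) / (Nat.factorial (2*s+1) : ℝ)) *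
            (gKron (Fin.snoc i a) (Fin.snoc j b) * pairProd A s i j * A α b a) := by
    simp only [Matrix.trace, Matrix.diag, newtonOdd, Matrix.of_apply]
    rw [← Finset.mul_sum, swap5, Finset.mul_sum]
    refine Finset.sum_congr rfl fun i _ => ?_
    rw [Finset.mul_sum]
    refine Finset.sum_congr rfl fun j _ => ?_
    rw [Finset.mul_sum]
    refine Finset.sum_congr rfl fun a _ => ?_
    rw [Finset.mul_sum]
    refine Finset.sum_congr rfl fun b _ => ?_
    rw [← Finset.sum_mul, ← Finset.sum_mul, sum_gKron_snoc]
    ring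
  have h2 : (newton A s * A α).trace
      = ∑ i : Fin (2 * s) → Fin n, ∑ j : Fin (2 * s) → Fin n, ∑ a : Fin n, ∑ b : Fin n,
          (1 / (Nat.factorial (2*s) : ℝ)) *
            (gKron (Fin.snoc i a) (Fin.snoc j b) * pairProd A s i j * A α b a) := by
    simp only [Matrix.trace, Matrix.diag, Matrix.mul_apply, newton, Matrix.of_apply]
    rw [← swap4]
    refine Finset.sum_congr rfl fun a _ => ?_
    refine Finset.sum_congr rfl fun b _ => ?_
    rw [Finset.mul_sum, Finset.sum_mul]
    refine Finset.sum_congr rfl fun i _ => ?_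
    rw [Finset.mul_sum, Finset.sum_mul]
    refine Finset.sum_congr rfl fun j _ => ?_
    ring
  rw [h1, h2, Finset.mul_sum]
  refine Finset.sum_congr rfl fun i _ => ?_
  rw [Finset.mul_sum]
  refine Finset.sum_congr rfl fun j _ => ?_
  rw [Finset.mul_sum]
  refine Finset.sum_congr rfl fun a _ => ?_
  rw [Finset.mul_sum]
  refine Finset.sum_congr rfl fun b _ => ?_
  have hfac : (Nat.factorial (2*s+1) : ℝ) = (2*s+1 : ℕ) * (Nat.factorial (2*s) : ℝ) := by
    rw [Nat.factorial_succ]; push_cast; ring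
  have h0 : ((2*s+1 : ℕ) : ℝ) ≠ 0 := by positivity
  have hf0 : (Nat.factorial (2*s) : ℝ) ≠ 0 := Nat.cast_ne_zero.mpr (Nat.factorial_ne_zero _)
  rw [hfac]
  field_simp
end
end

section
/- For every even integer r = 2s with 0 ≤ r ≤ n and every choice of real numbers X^{iα}_β (1 ≤ i ≤ n, 1 ≤ α, β ≤ l), the n-form Γ_r satisfies Γ_r ∧ ν = r!(n−r)! · S_r · θ^1 ∧ θ^2 ∧ ⋯ ∧ θ^{n+l} in the exterior algebra, where ν := θ^{n+1} ∧ ⋯ ∧ θ^{n+l}. -/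
open scoped BigOperators

noncomputable section

/-- `θ^a`: the basis one-forms, realized as the generators
`ι(e_a)` of the exterior algebra of `ℝ^m`. -/
def theta {m : ℕ} (a : Fin m) : ExteriorAlgebra ℝ (Fin m → ℝ) :=
  ExteriorAlgebra.ι ℝ (Pi.single a 1)

/-- `ω^{iα} = −Σ_j A^α{}_j^i θ^j + Σ_β X^{iα}_β θ^{n+β}`, where `A^α{}_j^i = A α i j`. -/
def omegaForm {n l : ℕ} (A : Fin l → Matrix (Fin n) (Fin n) ℝ)
    (X : Fin n → Fin l → Fin l → ℝ) (i : Fin n) (α : Fin l) :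
    ExteriorAlgebra ℝ (Fin (n + l) → ℝ) :=
  (-(∑ j : Fin n, A α i j • theta (Fin.castAdd l j)))
    + ∑ β : Fin l, X i α β • theta (Fin.natAdd n β)

/-- The Brito–Naveira `n`-form `Γ_r` for `r = 2s`:
`Γ_r = Σ_{σ ∈ Σ_n} ε(σ) Σ_{β₁,…,β_s} (ω^{σ(1)β₁} ∧ ω^{σ(2)β₁}) ∧ ⋯ ∧
  (ω^{σ(2s−1)β_s} ∧ ω^{σ(2s)β_s}) ∧ θ^{σ(2s+1)} ∧ ⋯ ∧ θ^{σ(n)}`. -/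
def GammaForm {n l : ℕ} (A : Fin l → Matrix (Fin n) (Fin n) ℝ)
    (X : Fin n → Fin l → Fin l → ℝ) (s : ℕ) (h : 2 * s ≤ n) :
    ExteriorAlgebra ℝ (Fin (n + l) → ℝ) :=
  ∑ σ : Equiv.Perm (Fin n), ∑ β : Fin s → Fin l,
    ((Equiv.Perm.sign σ : ℤ) : ℝ) •
      (((List.finRange s).map (fun t =>
          omegaForm A X (σ ⟨2 * t.1, by omega⟩) (β t) *
          omegaForm A X (σ ⟨2 * t.1 + 1, by omega⟩) (β t))).prod *
        ((List.finRange (n - 2 * s)).map (fun k =>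
          theta (Fin.castAdd l (σ ⟨2 * s + k.1, by omega⟩)))).prod)

/-- `ν = θ^{n+1} ∧ ⋯ ∧ θ^{n+l}`. -/
def nuForm (n l : ℕ) : ExteriorAlgebra ℝ (Fin (n + l) → ℝ) :=
  ((List.finRange l).map (fun β => theta (Fin.natAdd n β))).prod

/-- `θ^1 ∧ θ^2 ∧ ⋯ ∧ θ^{n+l}`. -/
def volForm (n l : ℕ) : ExteriorAlgebra ℝ (Fin (n + l) → ℝ) :=
  ((List.finRange (n + l)).map (fun a => theta a)).prod

/-!
Since `θ^{n+β} ∧ ν = 0`, each summand of `Γ_r ∧ ν` is the wedge product of `n + l` covectors,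
hence a determinant times the volume form. Permuting the columns by `σ`, that determinant times
`ε(σ)` collapses to the `r × r` determinant of `(-A^{β_{⌈a/2⌉}}{}_{σ(b)}^{σ(a)})_{a,b}`. Summing
over `β` and expanding by multilinearity in the rows (a Cauchy–Binet expansion), this becomes
`Σ_i δ^{i}_{j} ⟨B,B⟩⋯⟨B,B⟩` with `j = (σ(1),…,σ(r))`. Every injective `j` comes from exactly
`(n - r)!` permutations, and non-injective `j` contribute nothing, so the total is `r!(n-r)! S_r`.
-/

open Finset Matrix

theorem List.prod_ofFn_two_mul {M : Type*} [Monoid M] {s : ℕ} (f : Fin (2 * s) → M) :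
    (List.ofFn f).prod =
      (List.ofFn fun t : Fin s => f ⟨2 * t, by omega⟩ * f ⟨2 * t + 1, by omega⟩).prod := by
  rw [List.ofFn_mul', List.prod_flatten, List.map_ofFn]
  congr 1
  exact List.ofFn_inj.2 (funext fun t => by simp [List.ofFn_succ])

theorem List.ofFn_eq_append_of_le {α : Type*} {k m : ℕ} (h : k ≤ m) (f : Fin m → α) :
    List.ofFn f = List.ofFn (fun a : Fin k => f (Fin.castLE h a)) ++
      List.ofFn (fun b : Fin (m - k) => f ⟨k + b, by omega⟩) := by
  apply List.ext_getElem (by simp; omega)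
  intro i _ _
  simp only [List.getElem_ofFn, List.getElem_append, List.length_ofFn]
  split_ifs
  · rfl
  · congr 2
    omega

theorem Matrix.det_eq_det_submatrix_castLE_of_row_eq_single {R : Type*} [CommRing R] {k n : ℕ}
    (h : k ≤ n) (M : Matrix (Fin n) (Fin n) R) (hM : ∀ p : Fin n, k ≤ p.1 → M p = Pi.single p 1) :
    M.det = (M.submatrix (Fin.castLE h) (Fin.castLE h)).det := by
  obtain ⟨m, rfl⟩ := Nat.exists_eq_add_of_le h
  have hblocks : M.submatrix finSumFinEquiv finSumFinEquiv =
      fromBlocks (M.submatrix (Fin.castLE h) (Fin.castLE h))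
        (M.submatrix (Fin.castLE h) (Fin.natAdd k)) 0 1 := by
    ext (p | p) (u | u)
    · rfl
    · rfl
    · simp [hM (Fin.natAdd k p) (by simp), Pi.single_apply, Fin.ext_iff]
      omega
    · simp [hM (Fin.natAdd k p) (by simp), Pi.single_apply, Matrix.one_apply, eq_comm]
  rw [← det_submatrix_equiv_self finSumFinEquiv M, hblocks, det_fromBlocks_zero₂₁, det_one,
    mul_one]

theorem Matrix.det_mul_eq_sum_prod_mul_det {R m n : Type*} [CommRing R] [Fintype m]
    [DecidableEq m] [Fintype n] [DecidableEq n] (M : Matrix m n R) (D : Matrix n m R) :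
    (M * D).det = ∑ i : m → n, (∏ a, M a (i a)) * (D.submatrix i id).det := by
  have hrows : M * D = fun a => ∑ u, M a u • D u := by
    ext a b
    simp [Matrix.mul_apply]
  have hexpand := (detRowAlternating : (m → R) [⋀^m]→ₗ[R] R).toMultilinearMap.map_sum
    (fun a u => M a u • D u)
  change detRowAlternating (M * D) = _
  rw [hrows]
  refine hexpand.trans (Finset.sum_congr rfl fun i _ => ?_)
  exact (detRowAlternating : (m → R) [⋀^m]→ₗ[R] R).map_smul_univ _ _

theorem AlternatingMap.apply_eq_basis_det_smul {R M N ι : Type*} [CommRing R] [AddCommGroup M]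
    [Module R M] [AddCommGroup N] [Module R N] [Fintype ι] [DecidableEq ι]
    (e : Module.Basis ι R M) (f : M [⋀^ι]→ₗ[R] N) (v : ι → M) : f v = e.det v • f e := by
  have hf : f = (LinearMap.toSpanSingleton R N (f e)).compAlternatingMap e.det := by
    refine e.ext_alternating fun i hi => ?_
    let σ : Equiv.Perm ι := Equiv.ofBijective i (Finite.injective_iff_bijective.1 hi)
    change f (e ∘ σ) = (LinearMap.toSpanSingleton R N (f e)).compAlternatingMap e.det (e ∘ σ)
    simp [AlternatingMap.map_perm, Module.Basis.det_self]
  conv_lhs => rw [hf]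
  rfl

theorem prod_ofFn_ι_eq_det_smul {m : ℕ} (v : Fin m → Fin m → ℝ) :
    (List.ofFn fun k => ExteriorAlgebra.ι ℝ (v k)).prod =
      (Matrix.of v).det • (List.ofFn fun k => theta k).prod := by
  have hbasis : ⇑(Pi.basisFun ℝ (Fin m)) = fun k => Pi.single k 1 :=
    funext (Pi.basisFun_apply ℝ _)
  rw [← ExteriorAlgebra.ιMulti_apply,
    AlternatingMap.apply_eq_basis_det_smul (Pi.basisFun ℝ (Fin m)), Pi.basisFun_det_apply,
    hbasis, ExteriorAlgebra.ιMulti_apply]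
  rfl

theorem Equiv.Perm.card_filter_comp_castLE_eq {k n : ℕ} (h : k ≤ n) {j : Fin k → Fin n}
    (hj : Function.Injective j) :
    #{σ : Equiv.Perm (Fin n) | σ ∘ Fin.castLE h = j} = (n - k).factorial := by
  obtain ⟨τ, hτ⟩ := Equiv.Perm.exists_extending_pair _ j (Fin.castLE_injective h) hj
  have hfix : ∀ σ : Equiv.Perm (Fin n),
      σ ∘ Fin.castLE h = j ↔ ∀ x, ¬¬x.1 < k → (τ⁻¹ * σ) x = x := by
    intro σ
    simp only [not_not, Equiv.Perm.mul_apply, Equiv.Perm.inv_eq_iff_eq, funext_iff,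
      Function.comp_apply, ← hτ]
    exact ⟨fun hσ x hx => hσ ⟨x, hx⟩, fun hσ a => hσ _ a.2⟩
  rw [← Fintype.card_subtype, Fintype.card_congr ((Equiv.mulLeft τ⁻¹).subtypeEquiv
      (q := fun ρ => ∀ x, ¬¬x.1 < k → ρ x = x) hfix),
    ← Fintype.card_congr (Equiv.Perm.subtypeEquivSubtypePerm _), Fintype.card_perm,
    Fintype.card_subtype_compl, Fintype.card_fin_lt_of_le h, Fintype.card_fin]

theorem Equiv.Perm.sum_comp_castLE {M : Type*} [AddCommMonoid M] {k n : ℕ} (h : k ≤ n)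
    (G : (Fin k → Fin n) → M) (hG : ∀ j, ¬Function.Injective j → G j = 0) :
    ∑ σ : Equiv.Perm (Fin n), G (σ ∘ Fin.castLE h) = (n - k).factorial • ∑ j, G j := by
  classical
  rw [← Finset.sum_fiberwise univ (fun σ : Equiv.Perm (Fin n) => σ ∘ Fin.castLE h), smul_sum]
  refine sum_congr rfl fun j _ => ?_
  rw [sum_congr rfl fun σ hσ => congrArg G (mem_filter.1 hσ).2, sum_const]
  by_cases hj : Function.Injective j
  · rw [Equiv.Perm.card_filter_comp_castLE_eq h hj]
  · simp [hG j hj]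

section Forms

variable {n l s : ℕ} (A : Fin l → Matrix (Fin n) (Fin n) ℝ) (X : Fin n → Fin l → Fin l → ℝ)

def castAddPerm (l : ℕ) (σ : Equiv.Perm (Fin n)) : Equiv.Perm (Fin (n + l)) :=
  finSumFinEquiv.permCongr (σ.sumCongr 1)

@[simp]
lemma castAddPerm_castAdd (σ : Equiv.Perm (Fin n)) (p : Fin n) :
    castAddPerm l σ (Fin.castAdd l p) = Fin.castAdd l (σ p) := by
  simp [castAddPerm, Equiv.permCongr_apply]

@[simp]
lemma castAddPerm_natAdd (σ : Equiv.Perm (Fin n)) (c : Fin l) :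
    castAddPerm l σ (Fin.natAdd n c) = Fin.natAdd n c := by
  simp [castAddPerm, Equiv.permCongr_apply]

lemma castAddPerm_of_lt (σ : Equiv.Perm (Fin n)) (p : Fin (n + l)) (hp : p.1 < n) :
    castAddPerm l σ p = Fin.castAdd l (σ ⟨p, hp⟩) :=
  castAddPerm_castAdd σ ⟨p, hp⟩

@[simp]
lemma sign_castAddPerm (σ : Equiv.Perm (Fin n)) :
    Equiv.Perm.sign (castAddPerm l σ) = Equiv.Perm.sign σ := by
  simp [castAddPerm, Equiv.Perm.sign_permCongr, Equiv.Perm.sign_sumCongr]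

lemma omegaForm_eq_ι (i : Fin n) (α : Fin l) :
    omegaForm A X i α = ExteriorAlgebra.ι ℝ (Fin.append (-A α i) (X i α)) := by
  have hne : ∀ (j : Fin n) (c : Fin l), Fin.castAdd l j ≠ Fin.natAdd n c := fun j c h => by
    have := congrArg Fin.val h
    simp at this
    omega
  simp only [omegaForm, theta, ← map_smul, ← map_sum, ← map_neg, ← map_add]
  congr 1
  ext k
  refine Fin.addCases (fun j => ?_) (fun c => ?_) k <;>
    simp [Pi.single_apply, Finset.sum_apply, hne, (hne _ _).symm]

-- Row `p` is the `p`-th covector factor of a summand of `Γ_r ∧ ν`: `castAddPerm` fixes the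
-- last `l` indices, so the rows `p ≥ n` are the factors of `ν`.
def gammaRows (h : 2 * s ≤ n) (σ : Equiv.Perm (Fin n)) (β : Fin s → Fin l) :
    Fin (n + l) → Fin (n + l) → ℝ := fun p =>
  if hp : p.1 < 2 * s then
    Fin.append (-A (β ⟨p / 2, by omega⟩) (σ ⟨p, by omega⟩))
      (X (σ ⟨p, by omega⟩) (β ⟨p / 2, by omega⟩))
  else Pi.single (castAddPerm l σ p) 1

def pairedMatrix (j : Fin (2 * s) → Fin n) (β : Fin s → Fin l) :
    Matrix (Fin (2 * s)) (Fin (2 * s)) ℝ :=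
  Matrix.of fun a b => -A (β ⟨a / 2, by omega⟩) (j a) (j b)

lemma gammaTerm_mul_nuForm (h : 2 * s ≤ n) (σ : Equiv.Perm (Fin n)) (β : Fin s → Fin l) :
    ((List.finRange s).map (fun t =>
          omegaForm A X (σ ⟨2 * t.1, by omega⟩) (β t) *
          omegaForm A X (σ ⟨2 * t.1 + 1, by omega⟩) (β t))).prod *
        ((List.finRange (n - 2 * s)).map (fun k =>
          theta (Fin.castAdd l (σ ⟨2 * s + k.1, by omega⟩)))).prod * nuForm n l =
      (Matrix.of (gammaRows A X h σ β)).det • volForm n l := by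
  rw [volForm, ← List.ofFn_eq_map (f := fun a : Fin (n + l) => theta a),
    ← prod_ofFn_ι_eq_det_smul, List.ofFn_add, List.prod_append, List.ofFn_eq_append_of_le h,
    List.prod_append, List.prod_ofFn_two_mul, nuForm]
  simp only [← List.ofFn_eq_map]
  congr 3
  · congr 1
    funext t
    have ht : (⟨(2 * t + 1) / 2, by omega⟩ : Fin s) = t :=
      Fin.ext (show (2 * t.1 + 1) / 2 = t.1 by omega)
    simp [omegaForm_eq_ι, gammaRows, show 2 * t.1 + 1 < 2 * s by omega, ht]
  · congr 1
    funext k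
    simp only [gammaRows, theta, Fin.val_castLE, show ¬2 * s + k.1 < 2 * s by omega, dite_false]
    rw [castAddPerm_of_lt σ _ (by simp; omega)]
    rfl
  · funext c
    simp [gammaRows, theta, show ¬n + c.1 < 2 * s by omega]

lemma sign_mul_det_gammaRows (h : 2 * s ≤ n) (σ : Equiv.Perm (Fin n)) (β : Fin s → Fin l) :
    (Equiv.Perm.sign σ : ℝ) * (Matrix.of (gammaRows A X h σ β)).det =
      (pairedMatrix A (σ ∘ Fin.castLE h) β).det := by
  have h' : 2 * s ≤ n + l := h.trans (Nat.le_add_right n l)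
  have hunit : ∀ p : Fin (n + l), 2 * s ≤ p.1 →
      (Matrix.of (gammaRows A X h σ β)).submatrix id (castAddPerm l σ) p = Pi.single p 1 := by
    intro p hp
    ext u
    simp [gammaRows, show ¬p.1 < 2 * s by omega, Pi.single_apply]
  rw [← sign_castAddPerm (l := l), ← det_permute',
    det_eq_det_submatrix_castLE_of_row_eq_single h' _ hunit]
  congr 1
  ext a b
  have hb : castAddPerm l σ (Fin.castLE h' b) = Fin.castAdd l (σ (Fin.castLE h b)) :=
    castAddPerm_castAdd (l := l) σ (Fin.castLE h b)
  simp [gammaRows, pairedMatrix, hb]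
  rfl

lemma det_pairedMatrix (j : Fin (2 * s) → Fin n) (β : Fin s → Fin l) :
    (pairedMatrix A j β).det =
      ∑ i, (∏ a : Fin (2 * s), -A (β ⟨a / 2, by omega⟩) (j a) (i a)) * gKron i j := by
  have hmul : pairedMatrix A j β =
      (Matrix.of fun (a : Fin (2 * s)) u => -A (β ⟨a / 2, by omega⟩) (j a) u) *
        Matrix.of fun u b => if u = j b then (1 : ℝ) else 0 := by
    ext a b
    simp [pairedMatrix, Matrix.mul_apply]
  rw [hmul, det_mul_eq_sum_prod_mul_det]
  rfl

lemma sum_prod_neg_eq_pairProd (i j : Fin (2 * s) → Fin n) :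
    ∑ β : Fin s → Fin l, ∏ a : Fin (2 * s), -A (β ⟨a / 2, by omega⟩) (j a) (i a) =
      pairProd A s i j := by
  simp only [pairProd, pairing, Fintype.prod_sum]
  refine sum_congr rfl fun β _ => ?_
  rw [← List.prod_ofFn, List.prod_ofFn_two_mul, List.prod_ofFn]
  refine prod_congr rfl fun t _ => ?_
  have ht : (⟨(2 * t + 1) / 2, by omega⟩ : Fin s) = t :=
    Fin.ext (show (2 * t.1 + 1) / 2 = t.1 by omega)
  simp [ht]

lemma sum_det_pairedMatrix (j : Fin (2 * s) → Fin n) :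
    ∑ β, (pairedMatrix A j β).det = ∑ i, gKron i j * pairProd A s i j := by
  simp only [det_pairedMatrix, ← sum_prod_neg_eq_pairProd, mul_sum]
  rw [sum_comm]
  exact sum_congr rfl fun i _ => sum_congr rfl fun β _ => mul_comm _ _

lemma gKron_eq_zero_of_not_injective {r : ℕ} (i : Fin r → Fin n) {j : Fin r → Fin n}
    (hj : ¬Function.Injective j) : gKron i j = 0 := by
  obtain ⟨a, b, hab, hne⟩ := Function.not_injective_iff.1 hj
  exact det_zero_of_column_eq hne fun c => by simp [hab]

lemma GammaForm_mul_nuForm (h : 2 * s ≤ n) :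
    GammaForm A X s h * nuForm n l =
      (∑ σ : Equiv.Perm (Fin n), ∑ β, (pairedMatrix A (σ ∘ Fin.castLE h) β).det) •
        volForm n l := by
  rw [GammaForm, sum_mul, sum_smul]
  refine sum_congr rfl fun σ _ => ?_
  rw [sum_mul, sum_smul]
  refine sum_congr rfl fun β _ => ?_
  rw [smul_mul_assoc, gammaTerm_mul_nuForm, smul_smul, sign_mul_det_gammaRows]

lemma sum_sum_det_pairedMatrix (h : 2 * s ≤ n) :
    ∑ σ : Equiv.Perm (Fin n), ∑ β, (pairedMatrix A (σ ∘ Fin.castLE h) β).det =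
      (2 * s).factorial * (n - 2 * s).factorial * meanCurv A s := by
  simp only [sum_det_pairedMatrix]
  rw [Equiv.Perm.sum_comp_castLE h (fun j => ∑ i, gKron i j * pairProd A s i j)
    fun j hj => sum_eq_zero fun i _ => by rw [gKron_eq_zero_of_not_injective i hj, zero_mul],
    meanCurv, sum_comm, nsmul_eq_mul]
  field_simp

end Forms

/-- For every even `r = 2s` with `0 ≤ r ≤ n` and all reals `X^{iα}_β`,
`Γ_r ∧ ν = r!(n−r)! · S_r · θ^1 ∧ ⋯ ∧ θ^{n+l}`. -/
theorem stmt7 (n l : ℕ)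
    (A : Fin l → Matrix (Fin n) (Fin n) ℝ) (r s : ℕ) (hr : r = 2 * s) (hrn : r ≤ n)
    (X : Fin n → Fin l → Fin l → ℝ) :
    GammaForm A X s (by omega) * nuForm n l =
      ((Nat.factorial r : ℝ) * (Nat.factorial (n - r) : ℝ) * meanCurv A s) •
        volForm n l := by
  subst hr
  rw [GammaForm_mul_nuForm, sum_sum_det_pairedMatrix]
end
end

section
/- Let n = 2q with q ≥ 1, let l = 2t + 1 be odd with t ≥ 0, let c, V be real numbers, and let a : ℕ → ℝ satisfy a(0) = V and a(r+2) = c(n−r)(l+r)/((r+1)(r+2)) · a(r) for every even r with 0 ≤ r ≤ n−2. Then for every integer s with 0 ≤ 2s ≤ n, a(2s) = C(q, s) · C(2(t+s), 2s) · C(t+s, s)^{−1} · c^s · V, where C(·,·) denotes the binomial coefficient. (This is the closed form, in the case n even and l odd, obtained by induction from the recurrence S_{r+2}^T = c(n−r)(l+r)/((r+1)(r+2)) S_r^T for the total mean curvatures of a distribution of dimension n orthogonal to a totally geodesic foliation of dimension l on a closed manifold of constant curvature c, with V the volume of the manifold.) -/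
open scoped BigOperators

/-- the closed form for the total mean curvatures when `n = 2q` is
even and `l = 2t+1` is odd, obtained by induction from the recurrence
`a(r+2) = c(n−r)(l+r)/((r+1)(r+2)) · a(r)` with `a(0) = V`:
`a(2s) = C(q,s) · C(2(t+s), 2s) · C(t+s, s)⁻¹ · c^s · V`. -/
theorem stmt10 (n l q t : ℕ) (hq : 1 ≤ q) (hn : n = 2 * q) (hl : l = 2 * t + 1)
    (c V : ℝ) (a : ℕ → ℝ) (h0 : a 0 = V)
    (hrec : ∀ r : ℕ, Even r → r ≤ n - 2 →
      a (r + 2) = c * ((n : ℝ) - (r : ℝ)) * ((l : ℝ) + (r : ℝ)) /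
        (((r : ℝ) + 1) * ((r : ℝ) + 2)) * a r) :
    ∀ s : ℕ, 2 * s ≤ n →
      a (2 * s) = (q.choose s : ℝ) * ((2 * (t + s)).choose (2 * s) : ℝ) *
        (((t + s).choose s : ℝ))⁻¹ * c ^ s * V := by
  intro s
  induction s with
  | zero => intro _; simp [h0]
  | succ s ih =>
    intro hs
    have hsq : s < q := by omega
    have h2s : 2 * s ≤ n - 2 := by omega
    have ihv := ih (by omega)
    have e0 : 2 * (s + 1) = 2 * s + 2 := by ring
    have hrv := hrec (2 * s) (even_two_mul s) h2s
    rw [e0, hrv, ihv]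
    have e1 : 2 * (t + (s + 1)) = 2 * (t + s) + 2 := by ring
    have e2 : t + (s + 1) = (t + s) + 1 := by ring
    rw [e1, e2]
    -- nonzero facts
    have hD : (((t + s).choose s : ℕ) : ℝ) ≠ 0 :=
      Nat.cast_ne_zero.mpr (Nat.choose_pos (by omega)).ne'
    have hD' : ((((t + s) + 1).choose (s + 1) : ℕ) : ℝ) ≠ 0 :=
      Nat.cast_ne_zero.mpr (Nat.choose_pos (by omega)).ne'
    have hs1 : ((s : ℝ) + 1) ≠ 0 := by positivity
    have h2s1 : ((2 * s : ℝ) + 1) ≠ 0 := by positivity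
    have h2s2 : ((2 * s : ℝ) + 2) ≠ 0 := by positivity
    -- recurrences for the binomials, in ℝ
    have hA : (q.choose (s + 1) : ℝ) = (q.choose s : ℝ) * ((q : ℝ) - s) / ((s : ℝ) + 1) := by
      rw [eq_div_iff hs1]
      have := congrArg (Nat.cast : ℕ → ℝ) (Nat.choose_succ_right_eq q s)
      push_cast [Nat.cast_sub hsq.le] at this
      linarith
    have hB1 : ((2 * (t + s) + 1).choose (2 * s + 1) : ℝ)
        = ((2 * (t + s) : ℝ) + 1) * ((2 * (t + s)).choose (2 * s) : ℝ) / ((2 * s : ℝ) + 1) := by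
      rw [eq_div_iff h2s1]
      have := congrArg (Nat.cast : ℕ → ℝ) (Nat.add_one_mul_choose_eq (2 * (t + s)) (2 * s))
      push_cast at this
      linarith
    have hB2 : ((2 * (t + s) + 2).choose (2 * s + 2) : ℝ)
        = ((2 * (t + s) : ℝ) + 2) * ((2 * (t + s) + 1).choose (2 * s + 1) : ℝ) / ((2 * s : ℝ) + 2) := by
      rw [eq_div_iff h2s2]
      have := congrArg (Nat.cast : ℕ → ℝ) (Nat.add_one_mul_choose_eq (2 * (t + s) + 1) (2 * s + 1))
      push_cast at this
      linarith
    have hDrec : (((t + s) + 1).choose (s + 1) : ℝ)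
        = (((t : ℝ) + s) + 1) * ((t + s).choose s : ℝ) / ((s : ℝ) + 1) := by
      rw [eq_div_iff hs1]
      have := congrArg (Nat.cast : ℕ → ℝ) (Nat.add_one_mul_choose_eq (t + s) s)
      push_cast at this
      linarith
    rw [hA, hB2, hB1, hDrec]
    subst hn hl
    push_cast
    field_simp
    ring
end

section
/- Let n = 2q with q ≥ 1, let l = 2u be even with u ≥ 1, let c, V be real numbers, and let a : ℕ → ℝ satisfy a(0) = V and a(r+2) = c(n−r)(l+r)/((r+1)(r+2)) · a(r) for every even r with 0 ≤ r ≤ n−2. Then for every integer s with 0 ≤ 2s ≤ n, a(2s) = (2^{2s} (s!)^2 / (2s)!) · C(u+s−1, s) · C(q, s) · c^s · V, where C(·,·) denotes the binomial coefficient. (This is the closed form, in the case n and l both even, obtained by induction from the recurrence S_{r+2}^T = c(n−r)(l+r)/((r+1)(r+2)) S_r^T for the total mean curvatures of a distribution of dimension n orthogonal to a totally geodesic foliation of dimension l on a closed manifold of constant curvature c, with V the volume of the manifold.) -/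
/-!
Setting `r = 2s`, the recurrence becomes `a(2s+2) = c · 4(q−s)(u+s)/((2s+1)(2s+2)) · a(2s)`.
Each factor of the closed form contributes one piece of this ratio:
`2^{2s}(s!)²/(2s)!` gains `(2s+2)/(2s+1)`, `C(u+s−1, s)` gains `(u+s)/(s+1)`,
`C(q, s)` gains `(q−s)/(s+1)` and `c^s` gains `c`; so the closed form satisfies the same
recurrence and initial value, and induction on `s` concludes.
-/

open Nat

theorem Nat.choose_succ_mul_eq_mul_choose_pred (m k : ℕ) :
    m.choose (k + 1) * (k + 1) = m * (m - 1).choose k := by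
  cases m with
  | zero => simp
  | succ m => exact (add_one_mul_choose_eq m k).symm

theorem Nat.cast_choose_succ_mul {R : Type*} [CommRing R] (m k : ℕ) :
    (m.choose (k + 1) : R) * (k + 1) = ((m : R) - k) * m.choose k := by
  rcases le_or_gt k m with hkm | hmk
  · have h := congrArg (Nat.cast (R := R)) (choose_succ_right_eq m k)
    push_cast [Nat.cast_sub hkm] at h
    linear_combination h
  · simp [choose_eq_zero_of_lt hmk, choose_eq_zero_of_lt (Nat.lt_succ_of_lt hmk)]

theorem two_pow_mul_factorial_sq_div_factorial_succ (s : ℕ) :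
    (2 : ℝ) ^ (2 * (s + 1)) * ((s + 1)! : ℝ) ^ 2 / ((2 * (s + 1))! : ℝ) =
      (2 * s + 2) / (2 * s + 1) * ((2 : ℝ) ^ (2 * s) * (s ! : ℝ) ^ 2 / ((2 * s)! : ℝ)) := by
  rw [show 2 * (s + 1) = 2 * s + 1 + 1 by ring, factorial_succ, factorial_succ, factorial_succ]
  push_cast
  field_simp
  ring

noncomputable def evenTotalCurvature (q u : ℕ) (c V : ℝ) (s : ℕ) : ℝ :=
  ((2 : ℝ) ^ (2 * s) * (Nat.factorial s : ℝ) ^ 2 / (Nat.factorial (2 * s) : ℝ)) *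
    ((u + s - 1).choose s : ℝ) * (q.choose s : ℝ) * c ^ s * V

theorem evenTotalCurvature_succ (q u : ℕ) (c V : ℝ) (s : ℕ) :
    evenTotalCurvature q u c V (s + 1) =
      c * (2 * q - 2 * s) * (2 * u + 2 * s) / ((2 * s + 1) * (2 * s + 2)) *
        evenTotalCurvature q u c V s := by
  have hA : ((u + s).choose (s + 1) : ℝ) * (s + 1) = ((u : ℝ) + s) * (u + s - 1).choose s := by
    exact_mod_cast choose_succ_mul_eq_mul_choose_pred (u + s) s
  have hB : (q.choose (s + 1) : ℝ) * (s + 1) = ((q : ℝ) - s) * q.choose s :=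
    Nat.cast_choose_succ_mul q s
  have hs : (s : ℝ) + 1 ≠ 0 := by positivity
  rw [evenTotalCurvature, evenTotalCurvature, two_pow_mul_factorial_sq_div_factorial_succ,
    show u + (s + 1) - 1 = u + s by omega, eq_div_of_mul_eq hs hA, eq_div_of_mul_eq hs hB]
  field_simp
  ring

theorem stmt11_general (n l q u : ℕ) (hn : n = 2 * q) (hl : l = 2 * u)
    (c V : ℝ) (a : ℕ → ℝ) (h0 : a 0 = V)
    (hrec : ∀ r : ℕ, Even r → r ≤ n - 2 →
      a (r + 2) = c * ((n : ℝ) - (r : ℝ)) * ((l : ℝ) + (r : ℝ)) /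
        (((r : ℝ) + 1) * ((r : ℝ) + 2)) * a r) :
    ∀ s : ℕ, 2 * s ≤ n →
      a (2 * s) = ((2 : ℝ) ^ (2 * s) * (Nat.factorial s : ℝ) ^ 2 /
          (Nat.factorial (2 * s) : ℝ)) *
        ((u + s - 1).choose s : ℝ) * (q.choose s : ℝ) * c ^ s * V := by
  subst hn hl
  intro s hs
  change a (2 * s) = evenTotalCurvature q u c V s
  induction s with
  | zero => simpa [evenTotalCurvature] using h0
  | succ s ih =>
    rw [Nat.mul_succ, hrec (2 * s) (even_two_mul s) (by omega), ih (by omega),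
      evenTotalCurvature_succ]
    push_cast
    ring

/-- the closed form for the total mean curvatures when `n = 2q`
and `l = 2u` are both even, obtained by induction from the recurrence
`a(r+2) = c(n−r)(l+r)/((r+1)(r+2)) · a(r)` with `a(0) = V`:
`a(2s) = (2^{2s}(s!)²/(2s)!) · C(u+s−1, s) · C(q, s) · c^s · V`. -/
theorem stmt11 (n l q u : ℕ) (hq : 1 ≤ q) (hu : 1 ≤ u) (hn : n = 2 * q) (hl : l = 2 * u)
    (c V : ℝ) (a : ℕ → ℝ) (h0 : a 0 = V)
    (hrec : ∀ r : ℕ, Even r → r ≤ n - 2 →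
      a (r + 2) = c * ((n : ℝ) - (r : ℝ)) * ((l : ℝ) + (r : ℝ)) /
        (((r : ℝ) + 1) * ((r : ℝ) + 2)) * a r) :
    ∀ s : ℕ, 2 * s ≤ n →
      a (2 * s) = ((2 : ℝ) ^ (2 * s) * (Nat.factorial s : ℝ) ^ 2 /
          (Nat.factorial (2 * s) : ℝ)) *
        ((u + s - 1).choose s : ℝ) * (q.choose s : ℝ) * c ^ s * V :=
  stmt11_general n l q u hn hl c V a h0 hrec
end
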